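/- arXiv:2105.01020 — 7 statements merged into one kernel-verified Lean document; each statement's English description precedes it below -/
import Mathlib

section
/- Let K be a field of characteristic 0, 𝔮 a Lie algebra over K, and p_1, p_2 ∈ K[t] monic of degree n ≥ 2 with deg(p_1 − p_2) ≤ 1. For a, b ∈ K let β be the bilinear map on K[t] ⊗_K 𝔮 determined by β(f⊗x, g⊗y) = a·((fg) %ₘ p_1) ⊗ [x,y] + b·((fg) %ₘ p_2) ⊗ [x,y]. Then for all x, y, z ∈ 𝔮 and all f, g, h ∈ K[t] of degree < n, the Jacobi cyclic sum vanishes: β(β(f⊗x, g⊗y), h⊗z) + β(β(g⊗y, h⊗z), f⊗x) + β(β(h⊗z, f⊗x), g⊗y) = 0. (In other words, all linear combinations of the two Lie brackets [ , ]_{p_1} and [ , ]_{p_2} on 𝔮[t]/(p_i), transported to the space of polynomials of degree < n, are again Lie brackets: the two brackets are compatible.) -/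
/-!
Write `d = p₁ - p₂`. A polynomial `u` of degree `≤ 2n - 2` has the same quotient `q` by `p₁` and
by `p₂`, because `q d` has degree `< n`; hence `u %ₘ p₂ = u %ₘ p₁ + q d`. Feeding this twice into
the cross terms of `β (β (f ⊗ x) (g ⊗ y)) (h ⊗ z)` turns them into
`fgh %ₘ p₁ + fgh %ₘ p₂ - (fgh d /ₘ p₁²) d`, so the whole double bracket equals
`P(fgh) ⊗ ⁅⁅x, y⁆, z⁆` for a polynomial `P(fgh)` (`doubleBracketCoeff`) depending only on `fgh`. The three cyclic terms therefore
share their polynomial factor, and their sum vanishes by the Jacobi identity of `𝔮`.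
-/

open TensorProduct Polynomial

namespace Polynomial

theorem natDegree_lt_of_degree_lt {R : Type*} [Semiring R] {p : R[X]} {n : ℕ} (hn : n ≠ 0)
    (h : p.degree < n) : p.natDegree < n := by
  rcases eq_or_ne p 0 with rfl | hp
  · simpa [Nat.pos_iff_ne_zero]
  · exact (natDegree_lt_iff_degree_lt hp).2 h

section CommRing

variable {R : Type*} [CommRing R]

theorem modByMonic_mul_modByMonic {q : R[X]} (hq : q.Monic) (u v : R[X]) :
    (u %ₘ q * v) %ₘ q = (u * v) %ₘ q :=
  modByMonic_eq_of_dvd_sub hq <| by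
    rw [← sub_mul]; exact dvd_mul_of_dvd_left (dvd_modByMonic_sub u q) v

theorem modByMonic_eq_add_divByMonic_mul_sub [Nontrivial R] {p₁ p₂ : R[X]}
    (hp₁ : p₁.Monic) (hp₂ : p₂.Monic) (hdeg : p₁.degree ≤ p₂.degree) {u : R[X]}
    (hu : (u /ₘ p₁ * (p₁ - p₂)).degree < p₂.degree) :
    u %ₘ p₂ = u %ₘ p₁ + u /ₘ p₁ * (p₁ - p₂) := by
  refine (div_modByMonic_unique (u /ₘ p₁) _ hp₂ ⟨?_, ?_⟩).2
  · linear_combination modByMonic_add_div u p₁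
  · exact (degree_add_le _ _).trans_lt
      (max_lt ((degree_modByMonic_lt u hp₁).trans_le hdeg) hu)

theorem mul_divByMonic_mul_self [Nontrivial R] {p : R[X]} (hp : p.Monic) (u : R[X]) {v : R[X]}
    (hv : v.degree ≤ p.degree) :
    (u * v) /ₘ (p * p) = (u /ₘ p * v) /ₘ p := by
  refine (div_modByMonic_unique _ ((u /ₘ p * v) %ₘ p * p + u %ₘ p * v) (hp.mul hp) ⟨?_, ?_⟩).1
  · linear_combination v * modByMonic_add_div u p + p * modByMonic_add_div (u /ₘ p * v) p
  · have hp0 : p.degree ≠ ⊥ := degree_ne_bot.2 hp.ne_zero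
    rw [hp.degree_mul]
    refine (degree_add_le _ _).trans_lt (max_lt ?_ ?_)
    · rw [hp.degree_mul]
      exact WithBot.add_lt_add_right hp0 (degree_modByMonic_lt _ hp)
    · exact (degree_mul_le_of_le le_rfl hv).trans_lt
        (WithBot.add_lt_add_right hp0 (degree_modByMonic_lt _ hp))

variable [Nontrivial R] {n : ℕ} {p₁ p₂ : R[X]}

theorem modByMonic_eq_add_divByMonic_mul_sub_of_natDegree_le (hn : 2 ≤ n)
    (hp₁ : p₁.Monic) (hp₂ : p₂.Monic) (hd₁ : p₁.natDegree = n) (hd₂ : p₂.natDegree = n)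
    (hdiff : (p₁ - p₂).natDegree ≤ 1) {u : R[X]} (hu : u.natDegree ≤ 2 * n - 2) :
    u %ₘ p₂ = u %ₘ p₁ + u /ₘ p₁ * (p₁ - p₂) := by
  refine modByMonic_eq_add_divByMonic_mul_sub hp₁ hp₂ ?_ (degree_lt_degree ?_)
  · rw [degree_eq_natDegree hp₁.ne_zero, degree_eq_natDegree hp₂.ne_zero, hd₁, hd₂]
  · have := natDegree_mul_le (p := u /ₘ p₁) (q := p₁ - p₂)
    rw [natDegree_divByMonic u hp₁] at this
    omega

theorem modByMonic_cross_sum_eq (hn : 2 ≤ n)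
    (hp₁ : p₁.Monic) (hp₂ : p₂.Monic) (hd₁ : p₁.natDegree = n) (hd₂ : p₂.natDegree = n)
    (hdiff : (p₁ - p₂).natDegree ≤ 1) {u h : R[X]} (hu : u.natDegree ≤ 2 * n - 2)
    (hh : h.natDegree < n) :
    (u %ₘ p₂ * h) %ₘ p₁ + (u %ₘ p₁ * h) %ₘ p₂ =
      (u * h) %ₘ p₁ + (u * h) %ₘ p₂ - (u * h * (p₁ - p₂)) /ₘ (p₁ * p₁) * (p₁ - p₂) := by
  set d := p₁ - p₂
  set q := u /ₘ p₁
  have hq : q.natDegree ≤ n - 2 := by rw [natDegree_divByMonic u hp₁]; omega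
  have hqdh : (q * d * h).natDegree ≤ 2 * n - 2 := by
    have := natDegree_mul_le (p := q * d) (q := h)
    have := natDegree_mul_le (p := q) (q := d)
    omega
  have hhd : (h * d).degree ≤ p₁.degree := by
    rw [degree_eq_natDegree hp₁.ne_zero, hd₁]
    refine degree_le_of_natDegree_le ?_
    have := natDegree_mul_le (p := h) (q := d)
    omega
  have hu₂ := modByMonic_eq_add_divByMonic_mul_sub_of_natDegree_le hn hp₁ hp₂ hd₁ hd₂ hdiff hu
  have hqdh₂ :=
    modByMonic_eq_add_divByMonic_mul_sub_of_natDegree_le hn hp₁ hp₂ hd₁ hd₂ hdiff hqdh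
  have hquot : (u * h * d) /ₘ (p₁ * p₁) = (q * d * h) /ₘ p₁ := by
    rw [mul_assoc, mul_divByMonic_mul_self hp₁ u hhd, mul_comm h, mul_assoc]
  calc (u %ₘ p₂ * h) %ₘ p₁ + (u %ₘ p₁ * h) %ₘ p₂
      = ((u %ₘ p₁ + q * d) * h) %ₘ p₁ + ((u %ₘ p₂ - q * d) * h) %ₘ p₂ := by
        rw [hu₂, add_sub_cancel_right]
    _ = (u * h) %ₘ p₁ + (q * d * h) %ₘ p₁ + ((u * h) %ₘ p₂ - (q * d * h) %ₘ p₂) := by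
        rw [add_mul, sub_mul, add_modByMonic, sub_modByMonic, modByMonic_mul_modByMonic hp₁,
          modByMonic_mul_modByMonic hp₂]
    _ = _ := by rw [hqdh₂, hquot]; ring

end CommRing

end Polynomial

theorem lie_lie_add_lie_lie_add_lie_lie {L : Type*} [LieRing L] (x y z : L) :
    ⁅⁅x, y⁆, z⁆ + ⁅⁅y, z⁆, x⁆ + ⁅⁅z, x⁆, y⁆ = 0 := by
  rw [← lie_skew ⁅x, y⁆ z, ← lie_skew ⁅y, z⁆ x, ← lie_skew ⁅z, x⁆ y, ← neg_add, ← neg_add,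
    lie_jacobi, neg_zero]

section DoubleBracket

variable {R Q : Type*} [CommRing R] [LieRing Q] [LieAlgebra R Q]

noncomputable def doubleBracketCoeff (a b : R) (p₁ p₂ w : R[X]) : R[X] :=
  (a * a) • (w %ₘ p₁) + (b * b) • (w %ₘ p₂) +
    (a * b) • (w %ₘ p₁ + w %ₘ p₂ - (w * (p₁ - p₂)) /ₘ (p₁ * p₁) * (p₁ - p₂))

theorem bracket_bracket_tmul_eq [Nontrivial R] {n : ℕ} (hn : 2 ≤ n) {p₁ p₂ : R[X]}
    (hp₁ : p₁.Monic) (hp₂ : p₂.Monic) (hd₁ : p₁.natDegree = n) (hd₂ : p₂.natDegree = n)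
    (hdiff : (p₁ - p₂).natDegree ≤ 1) {a b : R}
    {β : (R[X] ⊗[R] Q) →ₗ[R] (R[X] ⊗[R] Q) →ₗ[R] (R[X] ⊗[R] Q)}
    (hβ : ∀ (f g : R[X]) (x y : Q),
      β (f ⊗ₜ x) (g ⊗ₜ y) = a • (((f * g) %ₘ p₁) ⊗ₜ ⁅x, y⁆) + b • (((f * g) %ₘ p₂) ⊗ₜ ⁅x, y⁆))
    {f g h : R[X]} (hf : f.natDegree < n) (hg : g.natDegree < n) (hh : h.natDegree < n)
    (x y z : Q) :
    β (β (f ⊗ₜ x) (g ⊗ₜ y)) (h ⊗ₜ z) =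
      doubleBracketCoeff a b p₁ p₂ (f * g * h) ⊗ₜ ⁅⁅x, y⁆, z⁆ := by
  have hfg : (f * g).natDegree ≤ 2 * n - 2 := by
    have := natDegree_mul_le (p := f) (q := g)
    omega
  rw [hβ, map_add, map_smul, map_smul, LinearMap.add_apply, LinearMap.smul_apply,
    LinearMap.smul_apply, hβ, hβ, modByMonic_mul_modByMonic hp₁, modByMonic_mul_modByMonic hp₂,
    doubleBracketCoeff, ← modByMonic_cross_sum_eq hn hp₁ hp₂ hd₁ hd₂ hdiff hfg hh]
  simp only [add_tmul, ← smul_tmul']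
  module

end DoubleBracket

theorem jacobi_for_linear_combination_of_brackets_general
    (K : Type*) [Field K]
    (Q : Type*) [LieRing Q] [LieAlgebra K Q]
    (n : ℕ) (hn : 2 ≤ n)
    (p₁ p₂ : Polynomial K) (h₁ : p₁.Monic) (h₂ : p₂.Monic)
    (hd₁ : p₁.natDegree = n) (hd₂ : p₂.natDegree = n)
    (hdiff : (p₁ - p₂).degree ≤ 1)
    (a b : K)
    (β : (Polynomial K ⊗[K] Q) →ₗ[K] (Polynomial K ⊗[K] Q) →ₗ[K] (Polynomial K ⊗[K] Q))
    (hβ : ∀ (f g : Polynomial K) (x y : Q),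
      β (f ⊗ₜ x) (g ⊗ₜ y) =
        a • (((f * g) %ₘ p₁) ⊗ₜ ⁅x, y⁆) + b • (((f * g) %ₘ p₂) ⊗ₜ ⁅x, y⁆)) :
    ∀ (x y z : Q) (f g h : Polynomial K),
      f.degree < (n : WithBot ℕ) → g.degree < (n : WithBot ℕ) → h.degree < (n : WithBot ℕ) →
      β (β (f ⊗ₜ x) (g ⊗ₜ y)) (h ⊗ₜ z) +
      β (β (g ⊗ₜ y) (h ⊗ₜ z)) (f ⊗ₜ x) +
      β (β (h ⊗ₜ z) (f ⊗ₜ x)) (g ⊗ₜ y) = 0 := by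
  intro x y z f g h hf hg hh
  have hn0 : n ≠ 0 := by omega
  replace hf := natDegree_lt_of_degree_lt hn0 hf
  replace hg := natDegree_lt_of_degree_lt hn0 hg
  replace hh := natDegree_lt_of_degree_lt hn0 hh
  have hdiff' : (p₁ - p₂).natDegree ≤ 1 := natDegree_le_of_degree_le hdiff
  simp only [bracket_bracket_tmul_eq hn h₁ h₂ hd₁ hd₂ hdiff' hβ, hf, hg, hh]
  rw [show g * h * f = f * g * h by ring, show h * f * g = f * g * h by ring, ← tmul_add,
    ← tmul_add, lie_lie_add_lie_lie_add_lie_lie, tmul_zero]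

/-- Compatibility of the brackets `[ , ]_{p₁}` and `[ , ]_{p₂}`: every linear combination
`a·[ , ]_{p₁} + b·[ , ]_{p₂}` satisfies the Jacobi identity on elements of degree `< n`. -/
theorem jacobi_for_linear_combination_of_brackets
    (K : Type*) [Field K] [CharZero K]
    (Q : Type*) [LieRing Q] [LieAlgebra K Q]
    (n : ℕ) (hn : 2 ≤ n)
    (p₁ p₂ : Polynomial K) (h₁ : p₁.Monic) (h₂ : p₂.Monic)
    (hd₁ : p₁.natDegree = n) (hd₂ : p₂.natDegree = n)
    (hdiff : (p₁ - p₂).degree ≤ 1)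
    (a b : K)
    (β : (Polynomial K ⊗[K] Q) →ₗ[K] (Polynomial K ⊗[K] Q) →ₗ[K] (Polynomial K ⊗[K] Q))
    (hβ : ∀ (f g : Polynomial K) (x y : Q),
      β (f ⊗ₜ x) (g ⊗ₜ y) =
        a • (((f * g) %ₘ p₁) ⊗ₜ ⁅x, y⁆) + b • (((f * g) %ₘ p₂) ⊗ₜ ⁅x, y⁆)) :
    ∀ (x y z : Q) (f g h : Polynomial K),
      f.degree < (n : WithBot ℕ) → g.degree < (n : WithBot ℕ) → h.degree < (n : WithBot ℕ) →
      β (β (f ⊗ₜ x) (g ⊗ₜ y)) (h ⊗ₜ z) +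
      β (β (g ⊗ₜ y) (h ⊗ₜ z)) (f ⊗ₜ x) +
      β (β (h ⊗ₜ z) (f ⊗ₜ x)) (g ⊗ₜ y) = 0 :=
  jacobi_for_linear_combination_of_brackets_general K Q n hn p₁ p₂ h₁ h₂ hd₁ hd₂ hdiff a b β hβ
end

section
/- Let K be a field, let p ∈ K[t] be monic of degree n ≥ 2, and let l ∈ K[t] with deg l ≤ 1 (so that p + l is again monic of degree n). Then for every h ∈ K[t] with deg h ≤ 2n − 2 one has (h %ₘ p) − (h %ₘ (p + l)) = l · (h /ₘ p). -/
/-!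
Writing `h = q * p + r`, we also have `h = q * (p + l) + (r - l * q)`. When `deg h ≤ 2n - 2`
the quotient `q` has degree at most `n - 2`, so `r - l * q` has degree below `n = deg (p + l)`
and is therefore the remainder of `h` modulo `p + l`.
-/

open Polynomial

theorem Polynomial.modByMonic_add_eq_sub_mul_divByMonic {R : Type*} [CommRing R] [Nontrivial R]
    {p l : R[X]} (hp : p.Monic) (hlp : l.degree < p.degree) (h : R[X])
    (hlq : (l * (h /ₘ p)).degree < p.degree) :
    h %ₘ (p + l) = h %ₘ p - l * (h /ₘ p) := by
  refine (div_modByMonic_unique (h /ₘ p) _ (hp.add_of_left hlp) ⟨?_, ?_⟩).2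
  · linear_combination modByMonic_add_div h p
  · rw [degree_add_eq_left_of_degree_lt hlp]
    exact (degree_sub_le _ _).trans_lt (max_lt (degree_modByMonic_lt h hp) hlq)

/-- If `p` is monic of degree `n ≥ 2`, `deg l ≤ 1`, and `deg h ≤ 2n - 2`, then
`(h %ₘ p) - (h %ₘ (p + l)) = l · (h /ₘ p)`. -/
theorem modByMonic_sub_modByMonic_add_linear
    (K : Type*) [Field K] (n : ℕ) (hn : 2 ≤ n)
    (p : Polynomial K) (hp : p.Monic) (hdeg : p.natDegree = n)
    (l : Polynomial K) (hl : l.degree ≤ 1)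
    (h : Polynomial K) (hh : h.degree ≤ (2 * n - 2 : ℕ)) :
    (h %ₘ p) - (h %ₘ (p + l)) = l * (h /ₘ p) := by
  have hl' : l.natDegree ≤ 1 := natDegree_le_of_degree_le hl
  have hh' : h.natDegree ≤ 2 * n - 2 := natDegree_le_of_degree_le hh
  have hlp : l.degree < p.degree := degree_lt_degree (by omega)
  have hlq : (l * (h /ₘ p)).degree < p.degree := by
    refine degree_lt_degree ((natDegree_mul_le (p := l)).trans_lt ?_)
    rw [natDegree_divByMonic h hp]
    omega
  rw [modByMonic_add_eq_sub_mul_divByMonic hp hlp h hlq]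
  ring
end

section
/- Let K be a field of characteristic 0, let 𝔮 be a finite-dimensional Lie algebra over K equipped with a nondegenerate symmetric invariant bilinear form B (i.e. B([x,y],z) = B(x,[y,z]) for all x,y,z) and a basis (x_1, …, x_m) orthonormal with respect to B. Let n ≥ 1, let 𝔥 = 𝔮^{⊕ n} be the product Lie algebra, let ι : 𝔥 → U(𝔥) be the canonical embedding into the universal enveloping algebra, and for x ∈ 𝔮 and 1 ≤ k ≤ n write x^{(k)} = ι(single_k x), where single_k x ∈ 𝔥 has x in the k-th coordinate and 0 elsewhere. Let z_1, …, z_n ∈ K be pairwise distinct and define the Gaudin Hamiltonians ℋ_k = ∑_{j ≠ k} (z_k − z_j)^{-1} · ∑_{i=1}^{m} x_i^{(k)} x_i^{(j)} ∈ U(𝔥) for 1 ≤ k ≤ n. Then ∑_{k=1}^{n} ℋ_k = 0 and ℋ_k ℋ_s = ℋ_s ℋ_k for all k, s. -/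
/-
With `Ω a b = ∑ᵢ xᵢ^(a) xᵢ^(b)` and `r a b = (z a - z b)⁻¹ • Ω a b`, operators at different sites
commute, so `Ω` is symmetric, `r` is antisymmetric and the Hamiltonians `ℋ k = ∑_{j ≠ k} r k j`
sum to zero. Invariance of `B` makes the Casimir element `∑ᵢ xᵢ ⊗ xᵢ` ad-invariant, which gives
the infinitesimal braid relations `⁅Ω a b, Ω a c + Ω b c⁆ = 0`; together with a partial fraction
identity they say that `r` solves the classical Yang–Baxter equation. Expanding `⁅ℋ k, ℋ s⁆`, the
terms with disjoint sites vanish and what is left is one Yang–Baxter combination for each third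
site `j`.
-/

open Finset

instance Pi.instLieRing {ι : Type*} {L : ι → Type*} [∀ i, LieRing (L i)] :
    LieRing (∀ i, L i) :=
  { Pi.addCommGroup with
    bracket := fun x y i => ⁅x i, y i⁆
    add_lie := fun x y z => funext fun i => add_lie (x i) (y i) (z i)
    lie_add := fun x y z => funext fun i => lie_add (x i) (y i) (z i)
    lie_self := fun x => funext fun i => lie_self (x i)
    leibniz_lie := fun x y z => funext fun i => leibniz_lie (x i) (y i) (z i) }

instance Pi.instLieAlgebra {K : Type*} {ι : Type*} {L : ι → Type*} [CommRing K]
    [∀ i, LieRing (L i)] [∀ i, LieAlgebra K (L i)] : LieAlgebra K (∀ i, L i) :=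
  { Pi.module ι L K with
    lie_smul := fun c x y => funext fun i => lie_smul c (x i) (y i) }

attribute [local instance 100] LieRing.ofAssociativeRing

namespace Finset

variable {ι M : Type*} [Fintype ι]

theorem sum_sum_eq_zero_of_antisymm [AddCommGroup M] (f : ι → ι → M)
    (hanti : ∀ i j, f j i = -f i j) (hdiag : ∀ i, f i i = 0) : ∑ i, ∑ j, f i j = 0 := by
  rw [← sum_product']
  refine sum_involution (fun p _ => p.swap)
    (fun p _ => by rw [Prod.fst_swap, Prod.snd_swap, hanti, neg_add_cancel]) ?_ (by simp) (by simp)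
  rintro ⟨i, j⟩ _ hne heq
  obtain rfl : j = i := congrArg Prod.fst heq
  exact hne (hdiag j)

theorem sum_sdiff_singleton_eq_add_sum [DecidableEq ι] [AddCommMonoid M] (f : ι → M) {k s : ι}
    (hsk : s ≠ k) :
    ∑ j ∈ univ \ {k}, f j = f s + ∑ j ∈ univ \ {k, s}, f j := by
  rw [← add_sum_erase _ _ (by simpa using hsk)]
  congr 2
  ext j
  simp [and_comm]

end Finset

section ClassicalYangBaxter

variable {ι A : Type*} [Fintype ι] [DecidableEq ι] [Ring A]

theorem lie_sum_sdiff_singleton_eq_zero_of_cybe (r : ι → ι → A)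
    (hanti : ∀ a b, a ≠ b → r b a = -r a b)
    (hdisj : ∀ a b c d, c ≠ a → c ≠ b → d ≠ a → d ≠ b → ⁅r a b, r c d⁆ = 0)
    (hcybe : ∀ a b c, a ≠ b → a ≠ c → b ≠ c →
      ⁅r a b, r a c⁆ + ⁅r a b, r b c⁆ + ⁅r a c, r b c⁆ = 0) (k s : ι) :
    ⁅∑ j ∈ univ \ {k}, r k j, ∑ t ∈ univ \ {s}, r s t⁆ = 0 := by
  rcases eq_or_ne k s with rfl | hks
  · exact lie_self _
  have hD : ∀ j ∈ univ \ {k, s}, j ≠ k ∧ j ≠ s := by simp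
  have hdouble : ∑ j ∈ univ \ {k, s}, ∑ t ∈ univ \ {k, s}, ⁅r k j, r s t⁆
      = ∑ j ∈ univ \ {k, s}, ⁅r k j, r s j⁆ := by
    refine sum_congr rfl fun j hj => sum_eq_single_of_mem j hj fun t ht htj => ?_
    exact hdisj k j s t hks.symm (hD j hj).2.symm (hD t ht).1 htj
  rw [sum_sdiff_singleton_eq_add_sum _ hks.symm, sum_sdiff_singleton_eq_add_sum _ hks,
    pair_comm s k, hanti k s hks,
    add_lie, lie_add, lie_add, lie_neg, lie_self, neg_zero, zero_add, sum_lie, sum_lie]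
  simp only [lie_sum]
  rw [hdouble, ← sum_add_distrib, ← sum_add_distrib]
  refine sum_eq_zero fun j hj => ?_
  obtain ⟨hjk, hjs⟩ := hD j hj
  rw [lie_neg, lie_skew, ← hcybe k s j hks hjk.symm hjs.symm]
  abel

end ClassicalYangBaxter

section GaudinHamiltonian

variable {K ι A : Type*} [Field K] [Ring A] [Algebra K A]

noncomputable def gaudinRMatrix (z : ι → K) (Ω : ι → ι → A) (a b : ι) : A :=
  (z a - z b)⁻¹ • Ω a b

noncomputable def gaudinHamiltonian [Fintype ι] [DecidableEq ι] (z : ι → K) (Ω : ι → ι → A)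
    (k : ι) : A :=
  ∑ j ∈ univ \ {k}, gaudinRMatrix z Ω k j

variable {z : ι → K} {Ω : ι → ι → A}

theorem gaudinRMatrix_self (a : ι) : gaudinRMatrix z Ω a a = 0 := by
  rw [gaudinRMatrix, sub_self, inv_zero, zero_smul]

theorem gaudinRMatrix_swap (hΩ : ∀ a b, a ≠ b → Ω a b = Ω b a) (a b : ι) :
    gaudinRMatrix z Ω b a = -gaudinRMatrix z Ω a b := by
  rcases eq_or_ne a b with rfl | hab
  · rw [gaudinRMatrix_self, neg_zero]
  · rw [gaudinRMatrix, gaudinRMatrix, hΩ a b hab, ← neg_sub, inv_neg, neg_smul]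

theorem lie_gaudinRMatrix (a b c d : ι) :
    ⁅gaudinRMatrix z Ω a b, gaudinRMatrix z Ω c d⁆
      = ((z a - z b)⁻¹ * (z c - z d)⁻¹) • ⁅Ω a b, Ω c d⁆ := by
  rw [gaudinRMatrix, gaudinRMatrix, smul_lie, LieAlgebra.lie_smul, smul_smul]

/-- All three brackets are `± ⁅Ω a b, Ω a c⁆`, and the coefficients cancel by the partial fraction
identity `1 / ((a - b)(a - c)) - 1 / ((a - b)(b - c)) + 1 / ((a - c)(b - c)) = 0`. -/
theorem gaudinRMatrix_cybe (hz : Function.Injective z) (hΩ : ∀ a b, a ≠ b → Ω a b = Ω b a)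
    (hbraid : ∀ a b c, a ≠ b → a ≠ c → b ≠ c → ⁅Ω a b, Ω a c + Ω b c⁆ = 0)
    {a b c : ι} (hab : a ≠ b) (hac : a ≠ c) (hbc : b ≠ c) :
    ⁅gaudinRMatrix z Ω a b, gaudinRMatrix z Ω a c⁆ + ⁅gaudinRMatrix z Ω a b, gaudinRMatrix z Ω b c⁆
      + ⁅gaudinRMatrix z Ω a c, gaudinRMatrix z Ω b c⁆ = 0 := by
  have h₁ : ⁅Ω a b, Ω b c⁆ = -⁅Ω a b, Ω a c⁆ :=
    eq_neg_of_add_eq_zero_right (by rw [← lie_add, hbraid a b c hab hac hbc])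
  have h₂ : ⁅Ω a c, Ω b c⁆ = ⁅Ω a b, Ω a c⁆ := by
    have := hbraid a c b hac hab hbc.symm
    rwa [lie_add, ← lie_skew, hΩ c b hbc.symm, neg_add_eq_zero, eq_comm] at this
  have hab' := sub_ne_zero.mpr (hz.ne hab)
  have hac' := sub_ne_zero.mpr (hz.ne hac)
  have hbc' := sub_ne_zero.mpr (hz.ne hbc)
  rw [lie_gaudinRMatrix, lie_gaudinRMatrix, lie_gaudinRMatrix, h₁, h₂, smul_neg, ← neg_smul,
    ← add_smul, ← add_smul]
  convert zero_smul K ⁅Ω a b, Ω a c⁆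
  field_simp
  ring

variable [Fintype ι] [DecidableEq ι]

theorem gaudinHamiltonian_eq_sum (k : ι) :
    gaudinHamiltonian z Ω k = ∑ j, gaudinRMatrix z Ω k j := by
  rw [gaudinHamiltonian, ← sum_sdiff (subset_univ {k}), sum_singleton, gaudinRMatrix_self,
    add_zero]

theorem sum_gaudinHamiltonian_eq_zero (hΩ : ∀ a b, a ≠ b → Ω a b = Ω b a) :
    ∑ k, gaudinHamiltonian z Ω k = 0 := by
  simp only [gaudinHamiltonian_eq_sum]
  exact sum_sum_eq_zero_of_antisymm _ (gaudinRMatrix_swap hΩ) gaudinRMatrix_self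

theorem commute_gaudinHamiltonian (hz : Function.Injective z)
    (hΩ : ∀ a b, a ≠ b → Ω a b = Ω b a)
    (hdisj : ∀ a b c d, c ≠ a → c ≠ b → d ≠ a → d ≠ b → ⁅Ω a b, Ω c d⁆ = 0)
    (hbraid : ∀ a b c, a ≠ b → a ≠ c → b ≠ c → ⁅Ω a b, Ω a c + Ω b c⁆ = 0) (k s : ι) :
    Commute (gaudinHamiltonian z Ω k) (gaudinHamiltonian z Ω s) := by
  refine commute_iff_lie_eq.mpr (lie_sum_sdiff_singleton_eq_zero_of_cybe _
    (fun a b _ => gaudinRMatrix_swap hΩ a b) (fun a b c d hca hcb hda hdb => ?_)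
    (fun a b c => gaudinRMatrix_cybe hz hΩ hbraid) k s)
  rw [lie_gaudinRMatrix, hdisj a b c d hca hcb hda hdb, smul_zero]

end GaudinHamiltonian

section Casimir

theorem Ring.mul_lie {A : Type*} [Ring A] (x y z : A) :
    ⁅x * y, z⁆ = x * ⁅y, z⁆ + ⁅x, z⁆ * y := by
  simp only [Ring.lie_def]
  noncomm_ring

variable {K Q κ : Type*} [CommRing K] [LieRing Q] [LieAlgebra K Q]
  {B : Q →ₗ[K] Q →ₗ[K] K} {bx : Module.Basis κ K Q}

theorem Module.Basis.repr_eq_of_orthonormal [DecidableEq κ]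
    (horth : ∀ i j, B (bx i) (bx j) = if i = j then 1 else 0) (q : Q) (l : κ) :
    bx.repr q l = B q (bx l) := by
  change bx.coord l q = B.flip (bx l) q
  congr 1
  refine bx.ext fun i => ?_
  simp [horth, Finsupp.single_apply, eq_comm]

/-- Invariance of the Casimir element `∑ xᵢ ⊗ xᵢ` under the adjoint action, tested against an
arbitrary bilinear map. -/
theorem sum_apply_lie_add_apply_lie_eq_zero [Fintype κ] [DecidableEq κ]
    (hsymm : ∀ x y : Q, B x y = B y x)
    (hinv : ∀ x y w : Q, B ⁅x, y⁆ w = B x ⁅y, w⁆)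
    (horth : ∀ i j, B (bx i) (bx j) = if i = j then 1 else 0)
    {M : Type*} [AddCommGroup M] [Module K M] (β : Q →ₗ[K] Q →ₗ[K] M) (y : Q) :
    ∑ i, (β ⁅bx i, y⁆ (bx i) + β (bx i) ⁅bx i, y⁆) = 0 := by
  set c : κ → κ → K := fun i l => B ⁅bx i, y⁆ (bx l)
  have hexpand : ∀ i, ⁅bx i, y⁆ = ∑ l, c i l • bx l := fun i => by
    simp only [c, ← Module.Basis.repr_eq_of_orthonormal horth, bx.sum_repr]
  have hanti : ∀ i l, c l i = -c i l := fun i l => by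
    simp only [c]
    rw [hinv, hsymm, ← lie_skew, map_neg, LinearMap.neg_apply]
  have hleft : ∑ i, β ⁅bx i, y⁆ (bx i) = ∑ i, ∑ l, c i l • β (bx l) (bx i) := by
    simp only [hexpand, map_sum, map_smul, LinearMap.sum_apply, LinearMap.smul_apply]
  have hright : ∑ i, β (bx i) ⁅bx i, y⁆ = ∑ i, ∑ l, c l i • β (bx l) (bx i) := by
    simp only [hexpand, map_sum, map_smul]
    exact sum_comm
  rw [sum_add_distrib, hleft, hright, ← sum_add_distrib]
  refine sum_eq_zero fun _ _ => ?_
  rw [← sum_add_distrib]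
  refine sum_eq_zero fun l _ => ?_
  rw [hanti, neg_smul, neg_add_cancel]

variable [Fintype κ] {ι A : Type*} [Ring A] [Algebra K A]

noncomputable def siteCasimir (e : ι → Q →ₗ⁅K⁆ A) (bx : Module.Basis κ K Q) (a b : ι) : A :=
  ∑ i, e a (bx i) * e b (bx i)

variable {e : ι → Q →ₗ⁅K⁆ A} (hcomm : ∀ a b, a ≠ b → ∀ x y, Commute (e a x) (e b y))
include hcomm

theorem siteCasimir_comm {a b : ι} (hab : a ≠ b) :
    siteCasimir e bx a b = siteCasimir e bx b a :=
  sum_congr rfl fun _ _ => (hcomm a b hab _ _).eq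

theorem commute_siteCasimir_of_ne {a b c : ι} (hca : c ≠ a) (hcb : c ≠ b) (y : Q) :
    Commute (siteCasimir e bx a b) (e c y) :=
  Commute.sum_left _ _ _ fun _ _ =>
    ((hcomm c a hca _ _).symm).mul_left (hcomm c b hcb _ _).symm

theorem commute_siteCasimir_of_disjoint {a b c d : ι}
    (hca : c ≠ a) (hcb : c ≠ b) (hda : d ≠ a) (hdb : d ≠ b) :
    Commute (siteCasimir e bx a b) (siteCasimir e bx c d) :=
  Commute.sum_right _ _ _ fun _ _ =>
    (commute_siteCasimir_of_ne hcomm hca hcb _).mul_right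
      (commute_siteCasimir_of_ne hcomm hda hdb _)

theorem commute_siteCasimir_add [DecidableEq κ] (hsymm : ∀ x y : Q, B x y = B y x)
    (hinv : ∀ x y w : Q, B ⁅x, y⁆ w = B x ⁅y, w⁆)
    (horth : ∀ i j, B (bx i) (bx j) = if i = j then 1 else 0) {a b : ι} (hab : a ≠ b) (y : Q) :
    Commute (siteCasimir e bx a b) (e a y + e b y) := by
  have hsite : ∀ c x, c = a ∨ c = b → ⁅e c x, e a y + e b y⁆ = e c ⁅x, y⁆ := by
    rintro c x (rfl | rfl)
    · rw [lie_add, (hcomm c b hab x y).lie_eq, add_zero, LieHom.map_lie]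
    · rw [lie_add, (hcomm c a hab.symm x y).lie_eq, zero_add, LieHom.map_lie]
  rw [commute_iff_lie_eq, siteCasimir, sum_lie]
  convert sum_apply_lie_add_apply_lie_eq_zero hsymm hinv horth
    ((LinearMap.mul K A).compl₁₂ (e a : Q →ₗ[K] A) (e b : Q →ₗ[K] A)) y using 2 with i
  rw [Ring.mul_lie, hsite a _ (.inl rfl), hsite b _ (.inr rfl), add_comm]
  rfl

theorem lie_siteCasimir_add_eq_zero [DecidableEq κ] (hsymm : ∀ x y : Q, B x y = B y x)
    (hinv : ∀ x y w : Q, B ⁅x, y⁆ w = B x ⁅y, w⁆)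
    (horth : ∀ i j, B (bx i) (bx j) = if i = j then 1 else 0) {a b c : ι}
    (hab : a ≠ b) (hac : a ≠ c) (hbc : b ≠ c) :
    ⁅siteCasimir e bx a b, siteCasimir e bx a c + siteCasimir e bx b c⁆ = 0 := by
  simp only [siteCasimir, ← sum_add_distrib, ← add_mul]
  refine (Commute.sum_right _ _ _ fun _ _ => ?_).lie_eq
  exact (commute_siteCasimir_add hcomm hsymm hinv horth hab _).mul_right
    (commute_siteCasimir_of_ne hcomm hac.symm hbc.symm _)

end Casimir

section PiSingle

variable (K : Type*) {ι Q : Type*} [CommRing K] [DecidableEq ι] [LieRing Q] [LieAlgebra K Q]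

def LieHom.single (k : ι) : Q →ₗ⁅K⁆ (ι → Q) where
  toFun := Pi.single (M := fun _ => Q) k
  map_add' := Pi.single_add (f := fun _ => Q) k
  map_smul' := Pi.single_smul (f := fun _ => Q) k
  map_lie' {x y} :=
    Pi.single_op₂ (fun _ : ι => (Bracket.bracket : Q → Q → Q)) (fun _ => lie_zero 0) k x y

variable {K}

theorem Pi.single_lie_single_of_ne {a b : ι} (hab : a ≠ b) (x y : Q) :
    ⁅(Pi.single a x : ι → Q), (Pi.single b y : ι → Q)⁆ = 0 := by
  funext j
  change ⁅(Pi.single a x : ι → Q) j, (Pi.single b y : ι → Q) j⁆ = 0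
  rcases eq_or_ne j a with rfl | hja
  · rw [Pi.single_eq_of_ne hab, lie_zero]
  · rw [Pi.single_eq_of_ne hja, zero_lie]

theorem UniversalEnvelopingAlgebra.commute_ι_single_of_ne {a b : ι} (hab : a ≠ b) (x y : Q) :
    Commute (UniversalEnvelopingAlgebra.ι K (Pi.single a x : ι → Q))
      (UniversalEnvelopingAlgebra.ι K (Pi.single b y : ι → Q)) := by
  rw [commute_iff_lie_eq, ← LieHom.map_lie, Pi.single_lie_single_of_ne hab, map_zero]

end PiSingle

theorem gaudin_hamiltonians_commute_general
    (K : Type*) [Field K]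
    (Q : Type*) [LieRing Q] [LieAlgebra K Q]
    (B : Q →ₗ[K] Q →ₗ[K] K)
    (hsymm : ∀ x y : Q, B x y = B y x)
    (hinv : ∀ x y w : Q, B ⁅x, y⁆ w = B x ⁅y, w⁆)
    (m : ℕ) (bx : Module.Basis (Fin m) K Q)
    (horth : ∀ i j, B (bx i) (bx j) = if i = j then 1 else 0)
    (n : ℕ) (z : Fin n → K) (hz : Function.Injective z)
    (H : Fin n → UniversalEnvelopingAlgebra K (Fin n → Q))
    (hH : ∀ k, H k = ∑ j ∈ Finset.univ \ {k}, (z k - z j)⁻¹ •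
      ∑ i, (UniversalEnvelopingAlgebra.ι K (Pi.single k (bx i)) *
            UniversalEnvelopingAlgebra.ι K (Pi.single j (bx i)))) :
    (∑ k, H k = 0) ∧ (∀ k s, H k * H s = H s * H k) := by
  set e : Fin n → Q →ₗ⁅K⁆ UniversalEnvelopingAlgebra K (Fin n → Q) :=
    fun k => (UniversalEnvelopingAlgebra.ι K).comp (LieHom.single K k)
  have hcomm : ∀ a b, a ≠ b → ∀ x y, Commute (e a x) (e b y) :=
    fun a b hab => UniversalEnvelopingAlgebra.commute_ι_single_of_ne hab
  obtain rfl : H = gaudinHamiltonian z (siteCasimir e bx) := funext hH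
  have hΩ : ∀ a b, a ≠ b → siteCasimir e bx a b = siteCasimir e bx b a :=
    fun a b => siteCasimir_comm hcomm
  have hdisj : ∀ a b c d, c ≠ a → c ≠ b → d ≠ a → d ≠ b →
      ⁅siteCasimir e bx a b, siteCasimir e bx c d⁆ = 0 :=
    fun a b c d hca hcb hda hdb => (commute_siteCasimir_of_disjoint hcomm hca hcb hda hdb).lie_eq
  have hbraid : ∀ a b c, a ≠ b → a ≠ c → b ≠ c →
      ⁅siteCasimir e bx a b, siteCasimir e bx a c + siteCasimir e bx b c⁆ = 0 :=
    fun a b c => lie_siteCasimir_add_eq_zero hcomm hsymm hinv horth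
  exact ⟨sum_gaudinHamiltonian_eq_zero hΩ,
    fun k s => (commute_gaudinHamiltonian hz hΩ hdisj hbraid k s).eq⟩

/-- The Gaudin Hamiltonians `ℋ_k = ∑_{j ≠ k} (z_k - z_j)⁻¹ ∑_i x_i^{(k)} x_i^{(j)}` in the
universal enveloping algebra of `𝔥 = 𝔮^{⊕n}` sum to zero and pairwise commute. -/
theorem gaudin_hamiltonians_commute
    (K : Type*) [Field K] [CharZero K]
    (Q : Type*) [LieRing Q] [LieAlgebra K Q] [FiniteDimensional K Q]
    (B : Q →ₗ[K] Q →ₗ[K] K)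
    (hsymm : ∀ x y : Q, B x y = B y x)
    (hnd : LinearMap.BilinForm.Nondegenerate B)
    (hinv : ∀ x y w : Q, B ⁅x, y⁆ w = B x ⁅y, w⁆)
    (m : ℕ) (bx : Module.Basis (Fin m) K Q)
    (horth : ∀ i j, B (bx i) (bx j) = if i = j then 1 else 0)
    (n : ℕ) (hn : 1 ≤ n) (z : Fin n → K) (hz : Function.Injective z)
    (H : Fin n → UniversalEnvelopingAlgebra K (Fin n → Q))
    (hH : ∀ k, H k = ∑ j ∈ Finset.univ \ {k}, (z k - z j)⁻¹ •
      ∑ i, (UniversalEnvelopingAlgebra.ι K (Pi.single k (bx i)) *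
            UniversalEnvelopingAlgebra.ι K (Pi.single j (bx i)))) :
    (∑ k, H k = 0) ∧ (∀ k s, H k * H s = H s * H k) :=
  gaudin_hamiltonians_commute_general K Q B hsymm hinv m bx horth n z hz H hH
end

section
/- Let K be a field of characteristic 0, let 𝔮 be a finite-dimensional Lie algebra over K with a nondegenerate symmetric invariant bilinear form B and a B-orthonormal basis (x_1, …, x_m), let n ≥ 3, and let p = t^n − (c_{n−1} t^{n−1} + … + c_1 t + c_0) ∈ K[t]. Let L = (K[t]/(p)) ⊗_K 𝔮 and regard L ⊗_K L as a Lie module over L via the diagonal action ⁅w, u⊗v⁆ = ⁅w,u⁆⊗v + u⊗⁅w,v⁆. For 0 ≤ a,b ≤ n−1 set T[a,b] = ∑_{i=1}^{m} (t̄^a ⊗ x_i) ⊗ (t̄^b ⊗ x_i) ∈ L ⊗ L and 𝐡[a,b] = T[a,b] + T[b,a]; for 3 ≤ k ≤ n set X_k = ∑_{b=2}^{k−1} T[k+1−b, b]. Then the element X = c_0·𝐡[1,0] + c_1·T[1,1] − (∑_{k=3}^{n−1} c_k·X_k) + X_n satisfies ⁅w, X⁆ = 0 for every w ∈ L. (This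 says that a certain explicit quadratic element lies in the Poisson centre of S(𝔮[t]/(p)).) -/
open TensorProduct Polynomial

/-- For a commutative `K`-algebra `A` and a Lie algebra `L` over `K`, the Lie algebra
`A ⊗[K] L` (with bracket `[f⊗x, g⊗y] = (fg) ⊗ [x,y]`) is also a Lie algebra over `K`. -/
noncomputable instance tensorLieAlgebraOfBase (K A L : Type*) [CommRing K] [CommRing A]
    [Algebra K A] [LieRing L] [LieAlgebra K L] : LieAlgebra K (A ⊗[K] L) :=
  { (inferInstance : Module K (A ⊗[K] L)) with
    lie_smul := fun c x y => by
      rw [← algebraMap_smul A c y, lie_smul, algebraMap_smul] }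

open Finset

/-!
Put `A = K[t]/(p)`, `u = t̄ ⊗ 1`, `v = 1 ⊗ t̄ ∈ A ⊗ A` and `Ω = ∑ xᵢ ⊗ xᵢ ∈ 𝔮 ⊗ 𝔮`. Then `T[a,b]` is the
image of `uᵃvᵇ ⊗ Ω` under `(A ⊗ A) ⊗ (𝔮 ⊗ 𝔮) ≃ (A ⊗ 𝔮) ⊗ (A ⊗ 𝔮)`, so `X` is the image of `P(u,v) ⊗ Ω`
for the polynomial `P` obtained by replacing `T[a,b]` with `uᵃvᵇ`. The Casimir element `Ω` is
`𝔮`-invariant because `B` is invariant, hence `f ⊗ x` acts on the image of `α ⊗ Ω` only through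
`(f ⊗ 1 - 1 ⊗ f) α`. As `t̄` generates `A`, `f ⊗ 1 - 1 ⊗ f` is a multiple of `u - v`, and
`(u - v) P(u,v) = 0`: each `X_k` telescopes to `uᵏv² - u²vᵏ`, and `p(u) = p(v) = 0` makes these cancel.
-/

section QuadraticElement

variable {K M N : Type*} [CommRing K] [AddCommGroup M] [Module K M] [AddCommGroup N] [Module K N]

-- With `E = T`, `innerAntidiagonalSum T k` is `X_k` and `quadraticElement c n T` is `X`.
def innerAntidiagonalSum (E : ℕ → ℕ → M) (k : ℕ) : M :=
  ∑ b ∈ Icc 2 (k - 1), E (k + 1 - b) b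

def quadraticElement (c : ℕ → K) (n : ℕ) (E : ℕ → ℕ → M) : M :=
  c 0 • (E 1 0 + E 0 1) + c 1 • E 1 1 - ∑ k ∈ Icc 3 (n - 1), c k • innerAntidiagonalSum E k
    + innerAntidiagonalSum E n

theorem map_quadraticElement (φ : M →ₗ[K] N) (c : ℕ → K) (n : ℕ) (E : ℕ → ℕ → M) :
    φ (quadraticElement c n E) = quadraticElement c n (fun a b ↦ φ (E a b)) := by
  simp only [quadraticElement, innerAntidiagonalSum, map_add, map_sub, map_sum, map_smul]

end QuadraticElement

section Telescoping

variable {R : Type*} [CommRing R]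

theorem innerAntidiagonalSum_pow_mul_sub (u v : R) {k : ℕ} (hk : 2 ≤ k) :
    innerAntidiagonalSum (fun a b ↦ u ^ a * v ^ b) k * (u - v) = u ^ k * v ^ 2 - u ^ 2 * v ^ k := by
  obtain ⟨j, rfl⟩ : ∃ j, k = j + 2 := ⟨k - 2, by omega⟩
  have hgeom : innerAntidiagonalSum (fun a b ↦ u ^ a * v ^ b) (j + 2)
      = u ^ 2 * v ^ 2 * ∑ i ∈ range j, v ^ i * u ^ (j - 1 - i) := by
    rw [innerAntidiagonalSum, ← Ico_add_one_right_eq_Icc, sum_Ico_eq_sum_range, mul_sum]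
    refine sum_congr (by congr 1) fun i hi ↦ ?_
    rw [show j + 2 + 1 - (2 + i) = 2 + (j - 1 - i) by grind]
    ring
  rw [hgeom, mul_assoc, ← neg_sub v u, mul_neg, geom_sum₂_mul]
  ring

variable {K : Type*} [CommRing K] [Algebra K R]

theorem quadraticElement_pow_mul_sub_eq_zero {n : ℕ} (hn : 3 ≤ n) (c : ℕ → K) {u v : R}
    (hu : u ^ n = ∑ k ∈ range n, c k • u ^ k) (hv : v ^ n = ∑ k ∈ range n, c k • v ^ k) :
    quadraticElement c n (fun a b ↦ u ^ a * v ^ b) * (u - v) = 0 := by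
  set D : ℕ → R := fun k ↦ u ^ k * v ^ 2 - u ^ 2 * v ^ k
  have hDn : D n = ∑ k ∈ range n, c k • D k := by
    simp only [D, hu, hv, smul_sub, sum_sub_distrib, sum_mul, mul_sum,
      smul_mul_assoc, mul_smul_comm]
  have hsplit : ∑ k ∈ range n, c k • D k
      = c 0 • D 0 + c 1 • D 1 + c 2 • D 2 + ∑ k ∈ Icc 3 (n - 1), c k • D k := by
    rw [range_eq_Ico, ← sum_Ico_consecutive _ (Nat.zero_le 3) hn, ← Ico_add_one_right_eq_Icc,
      Nat.sub_add_cancel (by omega), ← range_eq_Ico]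
    simp only [sum_range_succ, range_zero, sum_empty, zero_add]
  have htel : ∀ k ∈ Icc 3 (n - 1),
      c k • innerAntidiagonalSum (fun a b ↦ u ^ a * v ^ b) k * (u - v) = c k • D k := fun k hk ↦ by
    rw [smul_mul_assoc, innerAntidiagonalSum_pow_mul_sub u v (by rw [mem_Icc] at hk; omega)]
  rw [quadraticElement, add_mul, sub_mul, sum_mul, sum_congr rfl htel,
    innerAntidiagonalSum_pow_mul_sub u v (by omega),
    show u ^ n * v ^ 2 - u ^ 2 * v ^ n = D n from rfl, hDn, hsplit]
  simp only [D, Algebra.smul_def]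
  ring

end Telescoping

section OrthonormalBasis

variable {K M ι : Type*} [CommRing K] [AddCommGroup M] [Module K M] [Fintype ι] [DecidableEq ι]
  {B : M →ₗ[K] M →ₗ[K] K} {e : Module.Basis ι K M}

theorem sum_apply_basis_smul_basis (horth : ∀ i j, B (e i) (e j) = if i = j then 1 else 0)
    (y : M) : ∑ j, B y (e j) • e j = y := by
  conv_rhs => rw [← e.sum_repr y]
  refine sum_congr rfl fun j _ ↦ congrArg (· • e j) ?_
  conv_lhs => rw [← e.sum_repr y]
  simp only [map_sum, map_smul, LinearMap.sum_apply, LinearMap.smul_apply, horth,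
    smul_eq_mul, mul_ite, mul_one, mul_zero, sum_ite_eq', mem_univ, if_true]

end OrthonormalBasis

section Casimir

variable {K Q ι : Type*} [CommRing K] [LieRing Q] [LieAlgebra K Q] [Fintype ι] [DecidableEq ι]
  {B : Q →ₗ[K] Q →ₗ[K] K} {e : Module.Basis ι K Q}

theorem lie_sum_tmul_self_eq_zero (hinv : ∀ x y z : Q, B ⁅x, y⁆ z = B x ⁅y, z⁆)
    (horth : ∀ i j, B (e i) (e j) = if i = j then 1 else 0) (x : Q) :
    ⁅x, ∑ i, e i ⊗ₜ[K] e i⁆ = 0 := by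
  have hexpand : ∀ i, ⁅x, e i⁆ = ∑ j, B x ⁅e i, e j⁆ • e j := fun i ↦ by
    simp only [← hinv]
    exact (sum_apply_basis_smul_basis horth _).symm
  simp only [lie_sum, LieModule.lie_tmul_right, hexpand, sum_tmul, tmul_sum, ← smul_tmul',
    tmul_smul, sum_add_distrib]
  rw [sum_comm (s := univ) (t := univ) (f := fun i j ↦ B x ⁅e i, e j⁆ • e i ⊗ₜ[K] e j),
    ← sum_add_distrib]
  refine sum_eq_zero fun i _ ↦ ?_
  rw [← sum_add_distrib]
  refine sum_eq_zero fun j _ ↦ ?_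
  rw [← lie_skew, map_neg, neg_smul, neg_add_cancel]

end Casimir

section CurrentAlgebra

variable {K A Q : Type*} [CommRing K] [CommRing A] [Algebra K A] [LieRing Q] [LieAlgebra K Q]

theorem lie_tmul_tensorTensorTensorComm (f : A) (x : Q) (α : A ⊗[K] A) (ω : Q ⊗[K] Q) :
    ⁅f ⊗ₜ[K] x, tensorTensorTensorComm K A A Q Q (α ⊗ₜ ω)⁆
      = tensorTensorTensorComm K A A Q Q
          ((f ⊗ₜ 1 * α) ⊗ₜ (LieModule.toEnd K Q Q x).rTensor Q ω)
        + tensorTensorTensorComm K A A Q Q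
          ((1 ⊗ₜ f * α) ⊗ₜ (LieModule.toEnd K Q Q x).lTensor Q ω) := by
  induction α using TensorProduct.induction_on with
  | zero => simp
  | add α₁ α₂ h₁ h₂ => simp only [add_tmul, mul_add, map_add, lie_add, h₁, h₂]; abel
  | tmul a b =>
    induction ω using TensorProduct.induction_on with
    | zero => simp
    | add ω₁ ω₂ h₁ h₂ => simp only [tmul_add, map_add, lie_add, h₁, h₂]; abel
    | tmul y z =>
      simp only [Algebra.TensorProduct.tmul_mul_tmul, one_mul, tensorTensorTensorComm_tmul,
        LinearMap.rTensor_tmul, LinearMap.lTensor_tmul, LieModule.toEnd_apply_apply,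
        LieModule.lie_tmul_right, LieAlgebra.ExtendScalars.bracket_tmul]

theorem lie_tensorTensorTensorComm_eq_zero {Ω : Q ⊗[K] Q} (hΩ : ∀ x : Q, ⁅x, Ω⁆ = 0)
    {α : A ⊗[K] A} (hα : ∀ f : A, (f ⊗ₜ 1 - 1 ⊗ₜ f) * α = 0) (w : A ⊗[K] Q) :
    ⁅w, tensorTensorTensorComm K A A Q Q (α ⊗ₜ Ω)⁆ = 0 := by
  induction w using TensorProduct.induction_on with
  | zero => exact zero_lie _
  | add w₁ w₂ h₁ h₂ => rw [add_lie, h₁, h₂, add_zero]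
  | tmul f x =>
    have hleft : (1 ⊗ₜ f : A ⊗[K] A) * α = f ⊗ₜ 1 * α := by
      rw [← sub_eq_zero, ← sub_mul, ← neg_sub, neg_mul, hα, neg_zero]
    have hright : (LieModule.toEnd K Q Q x).lTensor Q Ω
        = -(LieModule.toEnd K Q Q x).rTensor Q Ω :=
      eq_neg_of_add_eq_zero_right (hΩ x)
    rw [lie_tmul_tensorTensorTensorComm, hleft, hright, tmul_neg, map_neg, add_neg_cancel]

end CurrentAlgebra

section Generator

variable {K A : Type*} [CommRing K] [CommRing A] [Algebra K A]

theorem tmul_one_sub_one_tmul_mem_span {τ : A} (hτ : Algebra.adjoin K {τ} = ⊤) (f : A) :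
    f ⊗ₜ[K] 1 - 1 ⊗ₜ f ∈ Ideal.span {τ ⊗ₜ[K] 1 - 1 ⊗ₜ τ} := by
  set I := Ideal.span {τ ⊗ₜ[K] (1 : A) - 1 ⊗ₜ τ}
  have hext : (Ideal.Quotient.mkₐ K I).comp Algebra.TensorProduct.includeLeft
      = (Ideal.Quotient.mkₐ K I).comp Algebra.TensorProduct.includeRight := by
    refine AlgHom.ext_of_adjoin_eq_top hτ fun _ h ↦ ?_
    rw [Set.mem_singleton_iff.mp h]
    exact Ideal.Quotient.eq.mpr (Ideal.mem_span_singleton_self _)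
  exact Ideal.Quotient.eq.mp (AlgHom.congr_fun hext f)

theorem tmul_one_sub_one_tmul_mul_eq_zero {τ : A} (hτ : Algebra.adjoin K {τ} = ⊤)
    {α : A ⊗[K] A} (hα : (τ ⊗ₜ 1 - 1 ⊗ₜ τ) * α = 0) (f : A) : (f ⊗ₜ 1 - 1 ⊗ₜ f) * α = 0 := by
  obtain ⟨g, hg⟩ := Ideal.mem_span_singleton'.mp (tmul_one_sub_one_tmul_mem_span hτ f)
  rw [← hg, mul_assoc, hα, mul_zero]

end Generator

section CasimirInvariance

variable {K A Q ι : Type*} [CommRing K] [CommRing A] [Algebra K A] [LieRing Q] [LieAlgebra K Q]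
  [Fintype ι] [DecidableEq ι] {B : Q →ₗ[K] Q →ₗ[K] K} {e : Module.Basis ι K Q}

theorem lie_quadraticElement_eq_zero (hinv : ∀ x y z : Q, B ⁅x, y⁆ z = B x ⁅y, z⁆)
    (horth : ∀ i j, B (e i) (e j) = if i = j then 1 else 0) {n : ℕ} (hn : 3 ≤ n) (c : ℕ → K)
    {τ : A} (hgen : Algebra.adjoin K {τ} = ⊤) (hτ : τ ^ n = ∑ k ∈ range n, c k • τ ^ k)
    (w : A ⊗[K] Q) :
    ⁅w, quadraticElement c n (fun a b ↦ ∑ i, ((τ ^ a) ⊗ₜ[K] e i) ⊗ₜ[K] ((τ ^ b) ⊗ₜ[K] e i))⁆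
      = 0 := by
  have hu : (τ ⊗ₜ[K] (1 : A)) ^ n = ∑ k ∈ range n, c k • (τ ⊗ₜ[K] (1 : A)) ^ k := by
    simpa using congrArg (Algebra.TensorProduct.includeLeft (R := K) (S := K) (B := A)) hτ
  have hv : ((1 : A) ⊗ₜ[K] τ) ^ n = ∑ k ∈ range n, c k • ((1 : A) ⊗ₜ[K] τ) ^ k := by
    simpa using congrArg (Algebra.TensorProduct.includeRight (R := K) (A := A)) hτ
  set Φ := (tensorTensorTensorComm K A A Q Q).toLinearMap ∘ₗ
    (TensorProduct.mk K (A ⊗[K] A) (Q ⊗[K] Q)).flip (∑ i, e i ⊗ₜ[K] e i)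
  have hΦ : (fun a b ↦ ∑ i, ((τ ^ a) ⊗ₜ[K] e i) ⊗ₜ[K] ((τ ^ b) ⊗ₜ[K] e i))
      = fun a b ↦ Φ ((τ ⊗ₜ[K] (1 : A)) ^ a * ((1 : A) ⊗ₜ[K] τ) ^ b) := by
    ext a b
    simp [Φ, Algebra.TensorProduct.tmul_pow, Algebra.TensorProduct.tmul_mul_tmul]
  rw [hΦ, ← map_quadraticElement]
  refine lie_tensorTensorTensorComm_eq_zero (lie_sum_tmul_self_eq_zero hinv horth)
    (tmul_one_sub_one_tmul_mul_eq_zero hgen ?_) w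
  rw [mul_comm]
  exact quadraticElement_pow_mul_sub_eq_zero hn c hu hv

end CasimirInvariance

theorem quadratic_element_in_poisson_centre_general
    (K : Type*) [Field K]
    (Q : Type*) [LieRing Q] [LieAlgebra K Q]
    (B : Q →ₗ[K] Q →ₗ[K] K)
    (hinv : ∀ x y w : Q, B ⁅x, y⁆ w = B x ⁅y, w⁆)
    (m : ℕ) (bx : Module.Basis (Fin m) K Q)
    (horth : ∀ i j, B (bx i) (bx j) = if i = j then 1 else 0)
    (n : ℕ) (hn : 3 ≤ n) (c : ℕ → K)
    (p : Polynomial K)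
    (hp : p = X ^ n - ∑ k ∈ Finset.range n, C (c k) * X ^ k)
    (T : ℕ → ℕ → ((Polynomial K ⧸ Ideal.span {p}) ⊗[K] Q) ⊗[K]
      ((Polynomial K ⧸ Ideal.span {p}) ⊗[K] Q))
    (hT : ∀ a b, T a b = ∑ i,
      ((Ideal.Quotient.mk (Ideal.span {p}) (X ^ a)) ⊗ₜ[K] bx i) ⊗ₜ[K]
      ((Ideal.Quotient.mk (Ideal.span {p}) (X ^ b)) ⊗ₜ[K] bx i)) :
    ∀ w : (Polynomial K ⧸ Ideal.span {p}) ⊗[K] Q,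
      ⁅w, c 0 • (T 1 0 + T 0 1) + c 1 • T 1 1
          - (∑ k ∈ Finset.Icc 3 (n - 1), c k • ∑ b ∈ Finset.Icc 2 (k - 1), T (k + 1 - b) b)
          + ∑ b ∈ Finset.Icc 2 (n - 1), T (n + 1 - b) b⁆ = 0 := by
  have hτ : Ideal.Quotient.mk (Ideal.span {p}) X ^ n
      = ∑ k ∈ range n, c k • Ideal.Quotient.mk (Ideal.span {p}) X ^ k := by
    have hp0 : Ideal.Quotient.mk (Ideal.span {p}) (X ^ n - ∑ k ∈ range n, C (c k) * X ^ k) = 0 :=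
      hp ▸ Ideal.Quotient.mk_singleton_self p
    rw [map_sub, sub_eq_zero, map_sum] at hp0
    rw [← map_pow, hp0]
    refine sum_congr rfl fun k _ ↦ ?_
    rw [map_mul, map_pow]
    exact (Algebra.smul_def (c k) (Ideal.Quotient.mk (Ideal.span {p}) X ^ k)).symm
  have hT' : T = fun a b ↦ ∑ i, ((Ideal.Quotient.mk (Ideal.span {p}) X ^ a) ⊗ₜ[K] bx i) ⊗ₜ[K]
      ((Ideal.Quotient.mk (Ideal.span {p}) X ^ b) ⊗ₜ[K] bx i) := by
    ext a b
    simp [hT]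
  intro w
  change ⁅w, quadraticElement c n T⁆ = 0
  rw [hT']
  exact lie_quadraticElement_eq_zero hinv horth hn c (AdjoinRoot.adjoinRoot_eq_top (f := p)) hτ w

set_option synthInstance.maxHeartbeats 1000000 in
set_option maxHeartbeats 1000000 in
/-- The explicit quadratic element
`X = c₀·𝐡[1,0] + c₁·T[1,1] - ∑_{k=3}^{n-1} cₖ·Xₖ + Xₙ` (with `𝐡[a,b] = T[a,b] + T[b,a]` and
`Xₖ = ∑_{b=2}^{k-1} T[k+1-b, b]`) in `L ⊗ L`, `L = 𝔮[t]/(p)`, is annihilated by the diagonal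
action of `L`; i.e. it lies in the Poisson centre of `S(𝔮[t]/(p))`. -/
theorem quadratic_element_in_poisson_centre
    (K : Type*) [Field K] [CharZero K]
    (Q : Type*) [LieRing Q] [LieAlgebra K Q] [FiniteDimensional K Q]
    (B : Q →ₗ[K] Q →ₗ[K] K)
    (hsymm : ∀ x y : Q, B x y = B y x)
    (hnd : LinearMap.BilinForm.Nondegenerate B)
    (hinv : ∀ x y w : Q, B ⁅x, y⁆ w = B x ⁅y, w⁆)
    (m : ℕ) (bx : Module.Basis (Fin m) K Q)
    (horth : ∀ i j, B (bx i) (bx j) = if i = j then 1 else 0)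
    (n : ℕ) (hn : 3 ≤ n) (c : ℕ → K)
    (p : Polynomial K)
    (hp : p = X ^ n - ∑ k ∈ Finset.range n, C (c k) * X ^ k)
    (T : ℕ → ℕ → ((Polynomial K ⧸ Ideal.span {p}) ⊗[K] Q) ⊗[K]
      ((Polynomial K ⧸ Ideal.span {p}) ⊗[K] Q))
    (hT : ∀ a b, T a b = ∑ i,
      ((Ideal.Quotient.mk (Ideal.span {p}) (X ^ a)) ⊗ₜ[K] bx i) ⊗ₜ[K]
      ((Ideal.Quotient.mk (Ideal.span {p}) (X ^ b)) ⊗ₜ[K] bx i)) :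
    ∀ w : (Polynomial K ⧸ Ideal.span {p}) ⊗[K] Q,
      ⁅w, c 0 • (T 1 0 + T 0 1) + c 1 • T 1 1
          - (∑ k ∈ Finset.Icc 3 (n - 1), c k • ∑ b ∈ Finset.Icc 2 (k - 1), T (k + 1 - b) b)
          + ∑ b ∈ Finset.Icc 2 (n - 1), T (n + 1 - b) b⁆ = 0 :=
  quadratic_element_in_poisson_centre_general K Q B hinv m bx horth n hn c p hp T hT
end

section
/- Let k ≥ 1 and d ≥ 1 be integers, and let A be the (k+1)×(k+1) integer matrix with rows and columns indexed by 0, …, k, whose entries are: A_{ij} = 0 if j < i − 1; A_{ij} = C(k+d−i, j−i+1) (binomial coefficient) if i − 1 ≤ j ≤ k − 1; and A_{ik} = C(k+d−i−1, k−i) in the last column. Then det A = 1. -/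
/-!
Subtracting from every row the next one turns, by Pascal's rule, the matrix for `d + 1` into the
matrix for `d`; the last row does not depend on `d`. This is multiplication by a unitriangular
matrix, so the determinant does not depend on `d`. For `d = 0` the last column is the last unit
vector, and deleting the last row and column leaves the matrix for `k - 1` and `d = 1`. Induction
on `k` ends at the `1 × 1` matrix `(1)`.
-/

namespace BinomialDet

def entry (k d i j : ℕ) : ℤ :=
  if j + 1 < i then 0
  else if j < k then ((k + d - i).choose (j + 1 - i) : ℤ)
  else ((k + d - i - 1).choose (k - i) : ℤ)

def binomialMatrix (k d : ℕ) : Matrix (Fin (k + 1)) (Fin (k + 1)) ℤ :=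
  Matrix.of fun i j => entry k d i j

lemma cast_choose_succ_succ_sub (n m : ℕ) :
    ((n + 1).choose (m + 1) : ℤ) - n.choose m = n.choose (m + 1) := by
  rw [Nat.choose_succ_succ']
  push_cast
  ring

lemma entry_sub_entry_succ_row {k d i : ℕ} (j : ℕ) (hi : i < k) :
    entry k (d + 1) i j - entry k (d + 1) (i + 1) j = entry k d i j := by
  unfold entry
  rcases lt_trichotomy (j + 1) i with h | rfl | h
  · simp [h, show j + 1 < i + 1 by omega]
  · simp [show j < k by omega]
  · simp only [show ¬ j + 1 < i by omega, show ¬ j + 1 < i + 1 by omega, if_false]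
    by_cases hjk : j < k
    · obtain ⟨m, hm⟩ : ∃ m, j + 1 - i = m + 1 := ⟨j - i, by omega⟩
      rw [if_pos hjk, if_pos hjk, if_pos hjk, show k + (d + 1) - i = k + d - i + 1 by omega,
        show k + (d + 1) - (i + 1) = k + d - i by omega, show j + 1 - (i + 1) = m by omega, hm,
        cast_choose_succ_succ_sub]
    · obtain ⟨m, hm⟩ : ∃ m, k - i = m + 1 := ⟨k - i - 1, by omega⟩
      rw [if_neg hjk, if_neg hjk, if_neg hjk, show k + (d + 1) - i - 1 = k + d - i - 1 + 1 by omega,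
        show k + (d + 1) - (i + 1) - 1 = k + d - i - 1 by omega, show k - (i + 1) = m by omega, hm,
        cast_choose_succ_succ_sub]

lemma entry_last_row_succ (k d j : ℕ) : entry k (d + 1) k j = entry k d k j := by
  unfold entry
  rcases lt_trichotomy (j + 1) k with h | h | h
  · simp [h]
  · simp [show j < k by omega, show j + 1 - k = 0 by omega]
  · simp [show ¬ j < k by omega]

def differenceMatrix (n : ℕ) : Matrix (Fin (n + 1)) (Fin (n + 1)) ℤ :=
  Matrix.of fun i j => if i = j then 1 else if (i : ℕ) + 1 = j then -1 else 0

lemma det_differenceMatrix (n : ℕ) : (differenceMatrix n).det = 1 := by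
  rw [Matrix.det_of_isUpperTriangular]
  · simp [differenceMatrix]
  · intro i j (hji : j < i)
    simp [differenceMatrix, hji.ne', show (i : ℕ) + 1 ≠ j by omega]

lemma differenceMatrix_mul_binomialMatrix (k d : ℕ) :
    differenceMatrix k * binomialMatrix k (d + 1) = binomialMatrix k d := by
  ext i j
  rw [Matrix.mul_apply]
  induction i using Fin.lastCases with
  | last =>
    rw [Finset.sum_eq_single (Fin.last k)]
    · simp [differenceMatrix, binomialMatrix, entry_last_row_succ k d j]
    · intro t _ ht
      simp [differenceMatrix, Ne.symm ht, show k + 1 ≠ (t : ℕ) by omega]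
    · simp
  | cast i =>
    rw [Fintype.sum_eq_add (Fin.castSucc i) i.succ Fin.castSucc_lt_succ.ne]
    · simpa [differenceMatrix, binomialMatrix, Fin.ext_iff, ← sub_eq_add_neg] using
        entry_sub_entry_succ_row j i.isLt
    · rintro t ⟨hti, htsucc⟩
      simp only [ne_eq, Fin.ext_iff, Fin.val_castSucc, Fin.val_succ] at hti htsucc
      simp [differenceMatrix, Fin.ext_iff, Ne.symm hti, Ne.symm htsucc]

lemma det_binomialMatrix_succ_right (k d : ℕ) :
    (binomialMatrix k (d + 1)).det = (binomialMatrix k d).det := by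
  rw [← differenceMatrix_mul_binomialMatrix k d, Matrix.det_mul, det_differenceMatrix, one_mul]

lemma entry_succ_zero_last_col {k i : ℕ} (hi : i ≤ k + 1) :
    entry (k + 1) 0 i (k + 1) = if i = k + 1 then 1 else 0 := by
  unfold entry
  rw [if_neg (by omega), if_neg (lt_irrefl _)]
  split_ifs with h
  · subst h
    simp
  · simp [Nat.choose_eq_zero_of_lt (show k + 1 - i - 1 < k + 1 - i by omega)]

lemma entry_succ_zero {k j : ℕ} (i : ℕ) (hj : j ≤ k) :
    entry (k + 1) 0 i j = entry k 1 i j := by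
  unfold entry
  rcases hj.lt_or_eq with hj | rfl
  · simp [hj, show j < k + 1 by omega]
  · simp [show j + 1 - i - 1 = j - i by omega]

lemma det_binomialMatrix_succ_zero (k : ℕ) :
    (binomialMatrix (k + 1) 0).det = (binomialMatrix k 1).det := by
  rw [Matrix.det_succ_column _ (Fin.last (k + 1)), Finset.sum_eq_single (Fin.last (k + 1))]
  · have hminor : (binomialMatrix (k + 1) 0).submatrix (Fin.last _).succAbove
        (Fin.last _).succAbove = binomialMatrix k 1 := by
      ext i j
      simp [binomialMatrix, entry_succ_zero i (Fin.is_le j)]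
    rw [hminor]
    simp [binomialMatrix, entry_succ_zero_last_col]
  · intro i _ hi
    simp [binomialMatrix, entry_succ_zero_last_col (Fin.is_le i), (Fin.val_lt_last hi).ne]
  · simp

theorem det_binomialMatrix (k d : ℕ) : (binomialMatrix k d).det = 1 := by
  induction k generalizing d with
  | zero => simp [Matrix.det_unique, binomialMatrix, entry]
  | succ k ih =>
    induction d with
    | zero => rw [det_binomialMatrix_succ_zero, ih]
    | succ d ihd => rw [det_binomialMatrix_succ_right, ihd]

end BinomialDet

theorem det_binomial_matrix_eq_one_general (k d : ℕ) :
    Matrix.det (Matrix.of fun i j : Fin (k + 1) =>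
      if (j : ℕ) + 1 < (i : ℕ) then (0 : ℤ)
      else if (j : ℕ) < k then ((k + d - i).choose (j + 1 - i) : ℤ)
      else ((k + d - i - 1).choose (k - i) : ℤ)) = 1 :=
  BinomialDet.det_binomialMatrix k d

/-- The determinant of the `(k+1) × (k+1)` integer matrix with entries
`A_{ij} = 0` for `j < i - 1`, `A_{ij} = C(k+d-i, j-i+1)` for `i-1 ≤ j ≤ k-1`, and
`A_{ik} = C(k+d-i-1, k-i)` in the last column, equals `1`. -/
theorem det_binomial_matrix_eq_one (k d : ℕ) (hk : 1 ≤ k) (hd : 1 ≤ d) :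
    Matrix.det (Matrix.of fun i j : Fin (k + 1) =>
      if (j : ℕ) + 1 < (i : ℕ) then (0 : ℤ)
      else if (j : ℕ) < k then ((k + d - i).choose (j + 1 - i) : ℤ)
      else ((k + d - i - 1).choose (k - i) : ℤ)) = 1 :=
  det_binomial_matrix_eq_one_general k d
end

section
/- Let K be a field of characteristic 0, 𝔮 a Lie algebra over K, and n ≥ 2. Let W = K[t]_{<n} ⊗_K 𝔮 and let ℓ_∞ be the bilinear map on W determined by ℓ_∞(f⊗x, g⊗y) = (((fg) %ₘ (t^n − 1)) − ((fg) %ₘ t^n)) ⊗ [x,y]. Let Φ : W → (K[t]/(t^{n+1})) ⊗_K 𝔮 be the linear map with Φ(t^a ⊗ x) = t̄^{ n−a} ⊗ x for 0 ≤ a ≤ n−1 and x ∈ 𝔮. Then Φ is injective, its image is the span of the subspaces t̄^c ⊗ 𝔮 for 1 ≤ c ≤ n (i.e. the ideal t̄·(K[t]/(t^{n+1})) ⊗ 𝔮 of the Takiff algebra 𝔮⟨n+1⟩), and Φ(ℓ_∞(u,v)) = ⁅Φ(u), Φ(v)⁆ for all u, v ∈ W. (Thus (W, ℓ_∞) is isomorphic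 to the nilpotent Lie algebra t·𝔮[t]/(t^{n+1}).) -/
/-!
`Φ` is `φ ⊗ id_𝔮`, where `φ : K[t]_{<n} → K[t]/(t^{n+1})` is reflection in degree `n`,
`p ↦ t^n p(1/t)`. Since the reflection of `p` has degree `≤ n`, it can only vanish modulo `t^{n+1}`
if `p = 0`; so `φ` is injective, and so is `Φ` because every `K`-module is flat. On monomials,
`φ(t^a) = t̄^(n-a)` with `1 ≤ n - a ≤ n`, which gives the image.

The map `ℓ_∞` acts on the polynomial factor by `p ↦ p %ₘ (t^n - 1) - p %ₘ t^n`. For `a, b < n`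
this sends `t^(a+b)` to `0` if `a + b < n` and to `t^(a+b-n)` otherwise, and reflecting gives
`t̄^(n-a) t̄^(n-b)` in both cases: `φ` turns `ℓ_∞` into multiplication in `K[t]/(t^{n+1})`.
Both sides of `Φ (ℓ u v) = ⁅Φ u, Φ v⁆` are bilinear, so checking it on `t^a ⊗ x` suffices.
-/

open TensorProduct Polynomial

namespace TensorProduct

variable {R M N P ι : Type*} [CommSemiring R] [AddCommMonoid M] [AddCommMonoid N]
  [AddCommMonoid P] [Module R M] [Module R N] [Module R P] {v : ι → M}

theorem ext_of_span_range_left (hv : Submodule.span R (Set.range v) = ⊤)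
    {f g : M ⊗[R] N →ₗ[R] P} (h : ∀ i x, f (v i ⊗ₜ x) = g (v i ⊗ₜ x)) : f = g :=
  ext <| LinearMap.ext_on_range hv fun i => LinearMap.ext (h i)

theorem ext₂_of_span_range_left (hv : Submodule.span R (Set.range v) = ⊤)
    {f g : M ⊗[R] N →ₗ[R] M ⊗[R] N →ₗ[R] P}
    (h : ∀ i j x y, f (v i ⊗ₜ x) (v j ⊗ₜ y) = g (v i ⊗ₜ x) (v j ⊗ₜ y)) : f = g :=
  ext_of_span_range_left hv fun i x => ext_of_span_range_left hv fun j y => h i j x y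

theorem range_eq_iSup_range_comp_mk (hv : Submodule.span R (Set.range v) = ⊤)
    (f : M ⊗[R] N →ₗ[R] P) :
    LinearMap.range f = ⨆ i, LinearMap.range (f ∘ₗ mk R M N (v i)) := by
  refine le_antisymm ?_ (iSup_le fun i => LinearMap.range_comp_le_range _ _)
  rintro _ ⟨w, rfl⟩
  induction w using TensorProduct.induction_on with
  | zero => rw [map_zero]; exact zero_mem _
  | add u w hu hw => rw [map_add]; exact add_mem hu hw
  | tmul m x =>
    have hx : LinearMap.range (f ∘ₗ (mk R M N).flip x) ≤
        ⨆ i, LinearMap.range (f ∘ₗ mk R M N (v i)) := by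
      rw [LinearMap.range_eq_map, ← hv, Submodule.map_span_le]
      rintro _ ⟨i, rfl⟩
      exact Submodule.mem_iSup_of_mem i ⟨x, rfl⟩
    exact hx ⟨m, rfl⟩

end TensorProduct

namespace Polynomial

variable {R : Type*} [CommRing R]

theorem monic_X_pow_sub_one {n : ℕ} (hn : n ≠ 0) : (X ^ n - 1 : R[X]).Monic := by
  simpa using monic_X_pow_sub_C (1 : R) hn

variable (R) in
noncomputable def reflectMk (n : ℕ) : R[X] →ₗ[R] R[X] ⧸ Ideal.span {(X : R[X]) ^ (n + 1)} where
  toFun p := Ideal.Quotient.mk _ (reflect n p)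
  map_add' p q := by rw [reflect_add, map_add]
  map_smul' c p := by
    rw [RingHom.id_apply, ← Ideal.Quotient.mkₐ_eq_mk R, ← map_smul, smul_eq_C_mul, smul_eq_C_mul,
      reflect_C_mul]

theorem reflectMk_X_pow {n i : ℕ} (h : i ≤ n) :
    reflectMk R n (X ^ i) = Ideal.Quotient.mk _ (X ^ (n - i)) := by
  rw [reflectMk, LinearMap.coe_mk, AddHom.coe_mk, reflect_monomial, revAt_le h]

noncomputable def ellInfty (n : ℕ) (p : R[X]) : R[X] := p %ₘ (X ^ n - 1) - p %ₘ X ^ n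

namespace degreeLT

variable (R) in
noncomputable def reflectMk (n : ℕ) : R[X]_n →ₗ[R] R[X] ⧸ Ideal.span {(X : R[X]) ^ (n + 1)} :=
  Polynomial.reflectMk R n ∘ₗ (degreeLT R n).subtype

theorem reflectMk_basis {n : ℕ} (a : Fin n) :
    reflectMk R n (basis R n a) = Ideal.Quotient.mk _ (X ^ (n - a)) := by
  rw [reflectMk, LinearMap.comp_apply, Submodule.subtype_apply, basis_val, reflectMk_X_pow a.2.le]

variable (R) in
theorem range_rTensor_reflectMk (Q : Type*) [AddCommGroup Q] [Module R Q] (n : ℕ) :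
    LinearMap.range ((reflectMk R n).rTensor Q) = ⨆ c ∈ Finset.Icc 1 n,
      LinearMap.range (TensorProduct.mk R (R[X] ⧸ Ideal.span {(X : R[X]) ^ (n + 1)}) Q
        ((Ideal.Quotient.mk (Ideal.span {(X : R[X]) ^ (n + 1)}) X) ^ c)) := by
  have hcomp (a : Fin n) : (reflectMk R n).rTensor Q ∘ₗ TensorProduct.mk R _ Q (basis R n a) =
      TensorProduct.mk R _ Q (Ideal.Quotient.mk _ X ^ (n - a)) := by
    ext x
    rw [LinearMap.comp_apply, TensorProduct.mk_apply, TensorProduct.mk_apply,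
      LinearMap.rTensor_tmul, reflectMk_basis, map_pow]
  rw [TensorProduct.range_eq_iSup_range_comp_mk (basis R n).span_eq]
  simp_rw [hcomp]
  refine le_antisymm (iSup_le fun a => ?_) (iSup₂_le fun c hc => ?_)
  · exact le_iSup₂_of_le (n - a) (Finset.mem_Icc.2 ⟨by omega, by omega⟩) le_rfl
  · obtain ⟨hc1, hcn⟩ := Finset.mem_Icc.1 hc
    refine le_iSup_of_le ⟨n - c, by omega⟩ ?_
    rw [Nat.sub_sub_self hcn]

end degreeLT

section Nontrivial

variable [Nontrivial R]

theorem X_pow_modByMonic_X_pow_sub_one {n s : ℕ} (h : s < n) :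
    (X ^ s : R[X]) %ₘ (X ^ n - 1) = X ^ s := by
  rw [modByMonic_eq_self_iff (monic_X_pow_sub_one (by omega)), ← C_1,
    degree_X_pow_sub_C (by omega), degree_X_pow]
  exact_mod_cast h

theorem ellInfty_X_pow_of_lt {n s : ℕ} (h : s < n) : ellInfty n (X ^ s : R[X]) = 0 := by
  rw [ellInfty, X_pow_modByMonic_X_pow_sub_one h, (modByMonic_eq_self_iff (monic_X_pow n)).2,
    sub_self]
  simpa using h

theorem ellInfty_X_pow_add {n s : ℕ} (h : s < n) : ellInfty n (X ^ (n + s) : R[X]) = X ^ s := by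
  rw [ellInfty, modByMonic_eq_of_dvd_sub (monic_X_pow_sub_one (by omega)) (p₂ := X ^ s)
      ⟨X ^ s, by ring⟩, X_pow_modByMonic_X_pow_sub_one h,
    (modByMonic_eq_zero_iff_dvd (monic_X_pow n)).2 (pow_dvd_pow X (by omega)), sub_zero]

theorem reflectMk_ellInfty_X_pow_mul {n a b : ℕ} (ha : a < n) (hb : b < n) :
    reflectMk R n (ellInfty n (X ^ a * X ^ b)) = reflectMk R n (X ^ a) * reflectMk R n (X ^ b) := by
  rw [← pow_add, reflectMk_X_pow ha.le, reflectMk_X_pow hb.le, ← map_mul, ← pow_add]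
  rcases lt_or_ge (a + b) n with h | h
  · rw [ellInfty_X_pow_of_lt h, map_zero, eq_comm, Ideal.Quotient.eq_zero_iff_mem,
      Ideal.mem_span_singleton]
    exact pow_dvd_pow X (by omega)
  · obtain ⟨s, hs⟩ := exists_add_of_le h
    rw [hs, ellInfty_X_pow_add (by omega), reflectMk_X_pow (by omega)]
    congr 2
    omega

namespace degreeLT

variable (R) in
theorem reflectMk_injective (n : ℕ) : Function.Injective (reflectMk R n) := by
  refine (injective_iff_map_eq_zero _).2 fun p hp => Subtype.ext ((reflect_eq_zero_iff (N := n)).1 ?_)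
  have hdvd : X ^ (n + 1) ∣ reflect n (p : R[X]) :=
    Ideal.mem_span_singleton.1 (Ideal.Quotient.eq_zero_iff_mem.1 hp)
  have hdeg : (reflect n (p : R[X])).natDegree < (X ^ (n + 1) : R[X]).natDegree := by
    have hp : (p : R[X]).natDegree ≤ n := natDegree_le_iff_degree_le.2 (mem_degreeLT.1 p.2).le
    have hrefl := natDegree_reflect_le (N := n) (p := (p : R[X]))
    rw [natDegree_X_pow]
    omega
  by_contra hne
  exact (monic_X_pow (n + 1)).not_dvd_of_natDegree_lt hne hdeg hdvd

theorem rTensor_reflectMk_ell {Q : Type*} [LieRing Q] [LieAlgebra R Q] {n : ℕ}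
    (ℓ : R[X]_n ⊗[R] Q →ₗ[R] R[X]_n ⊗[R] Q →ₗ[R] R[X]_n ⊗[R] Q)
    (hℓ : ∀ (f g : R[X]_n) (x y : Q), (degreeLT R n).subtype.rTensor Q (ℓ (f ⊗ₜ x) (g ⊗ₜ y)) =
      ellInfty n ((f : R[X]) * (g : R[X])) ⊗ₜ ⁅x, y⁆) (u v : R[X]_n ⊗[R] Q) :
    (reflectMk R n).rTensor Q (ℓ u v) =
      ⁅(reflectMk R n).rTensor Q u, (reflectMk R n).rTensor Q v⁆ := by
  let φ := (reflectMk R n).rTensor Q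
  -- The proof fields are eta-expanded so that the additive structure of the Lie ring and that of
  -- the tensor product get unified up to defeq.
  let bracket := LinearMap.mk₂ R
    (fun a b : (R[X] ⧸ Ideal.span {(X : R[X]) ^ (n + 1)}) ⊗[R] Q => ⁅a, b⁆)
    (fun a b c => add_lie a b c) (fun r a b => smul_lie r a b) (fun a b c => lie_add a b c)
    fun r a b => lie_smul r a b
  have key : ℓ.compr₂ φ = bracket.compl₁₂ φ φ := by
    refine TensorProduct.ext₂_of_span_range_left (basis R n).span_eq fun a b x y => ?_
    simp only [LinearMap.compr₂_apply, LinearMap.compl₁₂_apply, LinearMap.mk₂_apply, φ, bracket]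
    rw [reflectMk, LinearMap.rTensor_comp, LinearMap.comp_apply, hℓ]
    simp only [LinearMap.comp_apply, LinearMap.rTensor_tmul, Submodule.subtype_apply, basis_val,
      reflectMk_ellInfty_X_pow_mul a.2 b.2, LieAlgebra.ExtendScalars.bracket_tmul]
  exact LinearMap.congr_fun₂ key u v

end degreeLT

end Nontrivial

end Polynomial

theorem ell_infinity_iso_nilradical_takiff_general
    (K : Type*) [Field K]
    (Q : Type*) [LieRing Q] [LieAlgebra K Q]
    (n : ℕ)
    (ℓ : ((Polynomial.degreeLT K n : Submodule K (Polynomial K)) ⊗[K] Q) →ₗ[K]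
      ((Polynomial.degreeLT K n : Submodule K (Polynomial K)) ⊗[K] Q) →ₗ[K]
      ((Polynomial.degreeLT K n : Submodule K (Polynomial K)) ⊗[K] Q))
    (hℓ : ∀ (f g : Polynomial.degreeLT K n) (x y : Q),
      (LinearMap.rTensor Q (Polynomial.degreeLT K n).subtype) (ℓ (f ⊗ₜ x) (g ⊗ₜ y)) =
        ((((f : Polynomial K) * (g : Polynomial K)) %ₘ (X ^ n - 1) -
          ((f : Polynomial K) * (g : Polynomial K)) %ₘ (X ^ n : Polynomial K)) ⊗ₜ ⁅x, y⁆))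
    (e : ℕ → Polynomial.degreeLT K n)
    (he : ∀ a, a < n → ((e a : Polynomial K) = X ^ a))
    (Φ : ((Polynomial.degreeLT K n : Submodule K (Polynomial K)) ⊗[K] Q) →ₗ[K]
      (Polynomial K ⧸ Ideal.span {(X : Polynomial K) ^ (n + 1)}) ⊗[K] Q)
    (hΦ : ∀ (a : ℕ), a < n → ∀ x : Q, Φ (e a ⊗ₜ x) =
      (Ideal.Quotient.mk (Ideal.span {(X : Polynomial K) ^ (n + 1)}) (X ^ (n - a))) ⊗ₜ x) :
    Function.Injective Φ ∧
    LinearMap.range Φ = (⨆ c ∈ Finset.Icc 1 n,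
      LinearMap.range (TensorProduct.mk K (Polynomial K ⧸ Ideal.span {(X : Polynomial K) ^ (n + 1)}) Q
        ((Ideal.Quotient.mk (Ideal.span {(X : Polynomial K) ^ (n + 1)}) X) ^ c))) ∧
    (∀ u v, Φ (ℓ u v) = ⁅Φ u, Φ v⁆) := by
  have he_basis (a : Fin n) : e a = degreeLT.basis K n a :=
    Subtype.ext (by rw [he a a.2, degreeLT.basis_val])
  obtain rfl : Φ = (degreeLT.reflectMk K n).rTensor Q :=
    TensorProduct.ext_of_span_range_left (degreeLT.basis K n).span_eq fun a x => by
      rw [← he_basis, hΦ a a.2, LinearMap.rTensor_tmul, he_basis, degreeLT.reflectMk_basis]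
  exact ⟨Module.Flat.rTensor_preserves_injective_linearMap _ (degreeLT.reflectMk_injective K n),
    degreeLT.range_rTensor_reflectMk K Q n, degreeLT.rTensor_reflectMk_ell ℓ hℓ⟩

set_option synthInstance.maxHeartbeats 1000000 in
set_option maxHeartbeats 1000000 in
/-- `(W, ℓ_∞)`, where `ℓ_∞ = [ , ]_{t^n-1} - [ , ]_{t^n}` on `W = K[t]_{<n} ⊗ 𝔮`, is
isomorphic to the nilpotent Lie algebra `t·𝔮[t]/(t^{n+1})` via `Φ(t^a ⊗ x) = t̄^{n-a} ⊗ x`: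
`Φ` is injective, its image is the span of the `t̄^c ⊗ 𝔮` for `1 ≤ c ≤ n`, and `Φ`
transforms `ℓ_∞` into the Lie bracket of the Takiff algebra `𝔮⟨n+1⟩`. -/
theorem ell_infinity_iso_nilradical_takiff
    (K : Type*) [Field K] [CharZero K]
    (Q : Type*) [LieRing Q] [LieAlgebra K Q]
    (n : ℕ) (hn : 2 ≤ n)
    (ℓ : ((Polynomial.degreeLT K n : Submodule K (Polynomial K)) ⊗[K] Q) →ₗ[K]
      ((Polynomial.degreeLT K n : Submodule K (Polynomial K)) ⊗[K] Q) →ₗ[K]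
      ((Polynomial.degreeLT K n : Submodule K (Polynomial K)) ⊗[K] Q))
    (hℓ : ∀ (f g : Polynomial.degreeLT K n) (x y : Q),
      (LinearMap.rTensor Q (Polynomial.degreeLT K n).subtype) (ℓ (f ⊗ₜ x) (g ⊗ₜ y)) =
        ((((f : Polynomial K) * (g : Polynomial K)) %ₘ (X ^ n - 1) -
          ((f : Polynomial K) * (g : Polynomial K)) %ₘ (X ^ n : Polynomial K)) ⊗ₜ ⁅x, y⁆))
    (e : ℕ → Polynomial.degreeLT K n)
    (he : ∀ a, a < n → ((e a : Polynomial K) = X ^ a))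
    (Φ : ((Polynomial.degreeLT K n : Submodule K (Polynomial K)) ⊗[K] Q) →ₗ[K]
      (Polynomial K ⧸ Ideal.span {(X : Polynomial K) ^ (n + 1)}) ⊗[K] Q)
    (hΦ : ∀ (a : ℕ), a < n → ∀ x : Q, Φ (e a ⊗ₜ x) =
      (Ideal.Quotient.mk (Ideal.span {(X : Polynomial K) ^ (n + 1)}) (X ^ (n - a))) ⊗ₜ x) :
    Function.Injective Φ ∧
    LinearMap.range Φ = (⨆ c ∈ Finset.Icc 1 n,
      LinearMap.range (TensorProduct.mk K (Polynomial K ⧸ Ideal.span {(X : Polynomial K) ^ (n + 1)}) Q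
        ((Ideal.Quotient.mk (Ideal.span {(X : Polynomial K) ^ (n + 1)}) X) ^ c))) ∧
    (∀ u v, Φ (ℓ u v) = ⁅Φ u, Φ v⁆) :=
  ell_infinity_iso_nilradical_takiff_general K Q n ℓ hℓ e he Φ hΦ
end

section
/- Let K be a field of characteristic 0, 𝔮 a Lie algebra over K, and n ≥ 2. Let W = K[t]_{<n} ⊗_K 𝔮 and let ℓ' be the bilinear map on W determined by ℓ'(f⊗x, g⊗y) = (((fg) %ₘ (t^n − t)) − ((fg) %ₘ t^n)) ⊗ [x,y]. Then: (a) ℓ'(1⊗x, v) = 0 for all x ∈ 𝔮 and v ∈ W (the subspace K·1 ⊗ 𝔮 is central for ℓ'); (b) the subspace W₊ spanned by t^a ⊗ 𝔮 for 1 ≤ a ≤ n−1 is closed under ℓ', and the linear map σ : W₊ → (K[t]/(t^{n−1})) ⊗_K 𝔮 with σ(t^a ⊗ x) = t̄^{ n−1−a} ⊗ x (1 ≤ a ≤ n−1) is a linear bijection satisfying σ(ℓ'(u,v)) = ⁅σ(u), σ(v)⁆ for all u, v ∈ W₊. (Thus (W, ℓ') is isomorphic to the direct sum of the Takiff algebra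 𝔮⟨n−1⟩ and an abelian copy of 𝔮.) -/
open TensorProduct Polynomial

/-- The subspace `W₊ ⊂ K[t]_{<n} ⊗ 𝔮` spanned by the `t^a ⊗ 𝔮` with `1 ≤ a ≤ n-1`. -/
noncomputable def Wplus (K : Type*) [Field K] (Q : Type*) [AddCommGroup Q] [Module K Q]
    (n : ℕ) (e : ℕ → Polynomial.degreeLT K n) :
    Submodule K ((Polynomial.degreeLT K n : Submodule K (Polynomial K)) ⊗[K] Q) :=
  ⨆ a ∈ Finset.Icc 1 (n - 1),
    LinearMap.range (TensorProduct.mk K (Polynomial.degreeLT K n : Submodule K (Polynomial K)) Q (e a))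

/-!
On monomials, `ℓ' (t ^ a ⊗ x) (t ^ b ⊗ y)` vanishes when `a + b < n`, since then both remainders
equal `t ^ (a + b)`, and equals `t ^ (a + b - n + 1) ⊗ ⁅x, y⁆` when `a + b ≥ n`, since
`t ^ n ≡ t` modulo `t ^ n - t` but `t ^ n ≡ 0` modulo `t ^ n`. So `1 ⊗ 𝔮` is central and `W₊` is
closed under `ℓ'`. Reversing exponents `a ↦ n - 1 - a` turns the rule `(a, b) ↦ a + b - n + 1`
into addition of exponents in `K[t]/(t ^ (n - 1))`, and the vanishing case into `t̄ ^ m = 0` for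
`m ≥ n - 1`.
-/

namespace Polynomial

variable {R : Type*} [CommRing R]

theorem mk_X_pow_eq_zero_of_le {m j : ℕ} (h : m ≤ j) :
    Ideal.Quotient.mk (Ideal.span {(X : R[X]) ^ m}) (X ^ j) = 0 :=
  Ideal.Quotient.eq_zero_iff_mem.2 (Ideal.mem_span_singleton.2 (pow_dvd_pow X h))

variable [Nontrivial R] {n : ℕ}

theorem degree_X_pow_sub_X (hn : 1 < n) : (X ^ n - X : R[X]).degree = n := by
  rw [degree_sub_eq_left_of_degree_lt (by rw [degree_X_pow, degree_X]; exact_mod_cast hn),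
    degree_X_pow]

theorem monic_X_pow_sub_X (hn : 1 < n) : (X ^ n - X : R[X]).Monic :=
  monic_X_pow_sub (by rw [degree_X]; exact_mod_cast hn)

theorem modByMonic_X_pow_sub_X_sub_modByMonic_X_pow_of_degree_lt (hn : 1 < n) {p : R[X]}
    (hp : p.degree < n) : p %ₘ (X ^ n - X) - p %ₘ X ^ n = 0 := by
  rw [(modByMonic_eq_self_iff (monic_X_pow_sub_X hn)).2 (by rwa [degree_X_pow_sub_X hn]),
    (modByMonic_eq_self_iff (monic_X_pow n)).2 (by rwa [degree_X_pow]), sub_self]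

theorem X_pow_add_modByMonic_X_pow_sub_X_sub_modByMonic_X_pow {k : ℕ} (hk : k + 1 < n) :
    (X ^ (n + k) : R[X]) %ₘ (X ^ n - X) - X ^ (n + k) %ₘ X ^ n = X ^ (k + 1) := by
  have hn : 1 < n := by omega
  have hdecomp : (X ^ (n + k) : R[X]) = X ^ (k + 1) + (X ^ n - X) * X ^ k := by ring
  rw [(modByMonic_eq_zero_iff_dvd (monic_X_pow n)).2 (pow_dvd_pow X (by omega)), sub_zero,
    hdecomp, add_modByMonic, self_mul_modByMonic (monic_X_pow_sub_X hn), add_zero,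
    (modByMonic_eq_self_iff (monic_X_pow_sub_X hn)).2
      (by rw [degree_X_pow_sub_X hn, degree_X_pow]; exact_mod_cast hk)]

end Polynomial

section TruncatedPolynomial

variable (R : Type*) [CommRing R] [Nontrivial R] (m : ℕ)

-- `AdjoinRoot f` is by definition `R[X] ⧸ Ideal.span {f}`, with `root f = mk X`.
noncomputable def truncatedMonomialBasis :
    Module.Basis (Fin m) R (R[X] ⧸ Ideal.span {(X : R[X]) ^ m}) :=
  let pb := AdjoinRoot.powerBasis' (monic_X_pow (R := R) m)
  pb.basis.reindex (finCongr (natDegree_X_pow m : pb.dim = m))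

theorem truncatedMonomialBasis_apply (i : Fin m) :
    truncatedMonomialBasis R m i = Ideal.Quotient.mk _ (X ^ (i : ℕ)) := by
  unfold truncatedMonomialBasis
  erw [Module.Basis.reindex_apply, PowerBasis.coe_basis, map_pow]
  rfl

end TruncatedPolynomial

section Wplus

variable {K : Type*} [Field K] {Q : Type*} [AddCommGroup Q] [Module K Q] {n : ℕ}
  {e : ℕ → degreeLT K n}

theorem Wplus_eq_span :
    Wplus K Q n e = Submodule.span K (⋃ a ∈ Finset.Icc 1 (n - 1), Set.range (e a ⊗ₜ[K] ·)) := by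
  rw [Submodule.span_iUnion₂, Wplus]
  congr! with a
  rw [← Submodule.span_eq (LinearMap.range _), LinearMap.coe_range]
  rfl

theorem tmul_mem_Wplus {a : ℕ} (ha : 1 ≤ a) (ha' : a ≤ n - 1) (x : Q) :
    e a ⊗ₜ x ∈ Wplus K Q n e := by
  rw [Wplus_eq_span]
  exact Submodule.subset_span (Set.mem_biUnion (Finset.mem_Icc.2 ⟨ha, ha'⟩) ⟨x, rfl⟩)

theorem Wplus_linearMap_ext {M : Type*} [AddCommMonoid M] [Module K M]
    {f g : Wplus K Q n e →ₗ[K] M}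
    (h : ∀ a, 1 ≤ a → a ≤ n - 1 → ∀ (x : Q) (w : Wplus K Q n e),
      (w : degreeLT K n ⊗[K] Q) = e a ⊗ₜ x → f w = g w) : f = g := by
  have hspan : Submodule.span K (((↑) : Wplus K Q n e → degreeLT K n ⊗[K] Q) ⁻¹'
      ⋃ a ∈ Finset.Icc 1 (n - 1), Set.range (e a ⊗ₜ[K] ·)) = ⊤ := by
    rw [Wplus_eq_span]
    exact Submodule.span_span_coe_preimage
  refine LinearMap.ext_on hspan fun w hw => ?_
  simp only [Set.mem_preimage, Set.mem_iUnion, Finset.mem_Icc, Set.mem_range] at hw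
  obtain ⟨a, ⟨ha, ha'⟩, x, hx⟩ := hw
  exact h a ha ha' x w hx.symm

theorem Wplus_linearMap_ext₂ {M : Type*} [AddCommMonoid M] [Module K M]
    {f g : Wplus K Q n e →ₗ[K] Wplus K Q n e →ₗ[K] M}
    (h : ∀ a, 1 ≤ a → a ≤ n - 1 → ∀ b, 1 ≤ b → b ≤ n - 1 → ∀ (x y : Q) (u v : Wplus K Q n e),
      (u : degreeLT K n ⊗[K] Q) = e a ⊗ₜ x → (v : degreeLT K n ⊗[K] Q) = e b ⊗ₜ y →
      f u v = g u v) : f = g :=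
  Wplus_linearMap_ext fun a ha ha' x u hu =>
    Wplus_linearMap_ext fun b hb hb' y v hv => h a ha ha' b hb hb' x y u v hu hv

end Wplus

def IsRemainderDiffBracket {K : Type*} [Field K] {Q : Type*} [LieRing Q] [LieAlgebra K Q] (n : ℕ)
    (ℓ : (degreeLT K n ⊗[K] Q) →ₗ[K] (degreeLT K n ⊗[K] Q) →ₗ[K] (degreeLT K n ⊗[K] Q)) :
    Prop :=
  ∀ (f g : degreeLT K n) (x y : Q),
    (degreeLT K n).subtype.rTensor Q (ℓ (f ⊗ₜ x) (g ⊗ₜ y)) =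
      ((f * g : K[X]) %ₘ (X ^ n - X) - (f * g : K[X]) %ₘ X ^ n) ⊗ₜ ⁅x, y⁆

namespace IsRemainderDiffBracket

variable {K : Type*} [Field K] {Q : Type*} [LieRing Q] [LieAlgebra K Q] {n : ℕ}
  {ℓ : (degreeLT K n ⊗[K] Q) →ₗ[K] (degreeLT K n ⊗[K] Q) →ₗ[K] (degreeLT K n ⊗[K] Q)}

theorem apply_tmul_eq_zero_of_degree_lt (hℓ : IsRemainderDiffBracket n ℓ) (hn : 1 < n)
    {f g : degreeLT K n} (hfg : (f * g : K[X]).degree < n) (x y : Q) :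
    ℓ (f ⊗ₜ x) (g ⊗ₜ y) = 0 := by
  apply Module.Flat.rTensor_preserves_injective_linearMap _ (degreeLT K n).injective_subtype
  rw [hℓ, modByMonic_X_pow_sub_X_sub_modByMonic_X_pow_of_degree_lt hn hfg, zero_tmul, map_zero]

theorem apply_tmul_of_mul_eq_X_pow_add (hℓ : IsRemainderDiffBracket n ℓ)
    {f g h : degreeLT K n} {k : ℕ} (hk : k + 1 < n) (hfg : (f * g : K[X]) = X ^ (n + k))
    (hh : (h : K[X]) = X ^ (k + 1)) (x y : Q) : ℓ (f ⊗ₜ x) (g ⊗ₜ y) = h ⊗ₜ ⁅x, y⁆ := by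
  apply Module.Flat.rTensor_preserves_injective_linearMap _ (degreeLT K n).injective_subtype
  rw [hℓ, hfg, X_pow_add_modByMonic_X_pow_sub_X_sub_modByMonic_X_pow hk, ← hh,
    LinearMap.rTensor_tmul, Submodule.subtype_apply]

theorem apply_one_tmul (hℓ : IsRemainderDiffBracket n ℓ) (hn : 1 < n) {f : degreeLT K n}
    (hf : (f : K[X]) = 1) (x : Q) (v : degreeLT K n ⊗[K] Q) : ℓ (f ⊗ₜ x) v = 0 := by
  induction v using TensorProduct.induction_on with
  | zero => exact map_zero _
  | tmul g y =>
    exact hℓ.apply_tmul_eq_zero_of_degree_lt hn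
      (by rw [hf, one_mul]; exact mem_degreeLT.1 g.2) x y
  | add v w hv hw => rw [map_add, hv, hw, add_zero]

variable {e : ℕ → degreeLT K n}

theorem apply_tmul_of_add_lt (hℓ : IsRemainderDiffBracket n ℓ)
    (he : ∀ a < n, (e a : K[X]) = X ^ a) (hn : 1 < n) {a b : ℕ} (hab : a + b < n) (x y : Q) :
    ℓ (e a ⊗ₜ x) (e b ⊗ₜ y) = 0 :=
  hℓ.apply_tmul_eq_zero_of_degree_lt hn (by
    rw [he a (by omega), he b (by omega), ← pow_add, degree_X_pow]; exact_mod_cast hab) x y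

theorem apply_tmul_of_le_add (hℓ : IsRemainderDiffBracket n ℓ)
    (he : ∀ a < n, (e a : K[X]) = X ^ a) {a b : ℕ} (ha : a < n) (hb : b < n) (hab : n ≤ a + b)
    (x y : Q) : ℓ (e a ⊗ₜ x) (e b ⊗ₜ y) = e (a + b - n + 1) ⊗ₜ ⁅x, y⁆ :=
  hℓ.apply_tmul_of_mul_eq_X_pow_add (k := a + b - n) (by omega)
    (by rw [he a ha, he b hb, ← pow_add, Nat.add_sub_of_le hab])
    (by rw [he _ (by omega)]) x y

theorem apply_mem_Wplus (hℓ : IsRemainderDiffBracket n ℓ)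
    (he : ∀ a < n, (e a : K[X]) = X ^ a) {u v : degreeLT K n ⊗[K] Q}
    (hu : u ∈ Wplus K Q n e) (hv : v ∈ Wplus K Q n e) : ℓ u v ∈ Wplus K Q n e := by
  have hmap₂ := Submodule.apply_mem_map₂ ℓ hu hv
  rw [Wplus_eq_span, Submodule.map₂_span_span] at hmap₂
  refine Submodule.span_le.2 (Set.image2_subset_iff.2 fun _ ha _ hb => ?_) hmap₂
  simp only [Set.mem_iUnion, Finset.mem_Icc, Set.mem_range] at ha hb
  obtain ⟨a, ⟨ha, ha'⟩, x, rfl⟩ := ha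
  obtain ⟨b, ⟨hb, hb'⟩, y, rfl⟩ := hb
  rcases lt_or_ge (a + b) n with hab | hab
  · rw [hℓ.apply_tmul_of_add_lt he (by omega) hab]
    exact zero_mem _
  · rw [hℓ.apply_tmul_of_le_add he (by omega) (by omega) hab]
    exact tmul_mem_Wplus (by omega) (by omega) _

end IsRemainderDiffBracket

section Reversal

variable {K : Type*} [Field K] {Q : Type*} [AddCommGroup Q] [Module K Q] {n : ℕ}
  {e : ℕ → degreeLT K n}

def IsExponentReversal (σ : Wplus K Q n e →ₗ[K] (K[X] ⧸ Ideal.span {(X : K[X]) ^ (n - 1)}) ⊗[K] Q) :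
    Prop :=
  ∀ (a : ℕ), 1 ≤ a → a ≤ n - 1 → ∀ (x : Q) (w : Wplus K Q n e),
    (w : degreeLT K n ⊗[K] Q) = e a ⊗ₜ x →
    σ w = Ideal.Quotient.mk (Ideal.span {(X : K[X]) ^ (n - 1)}) (X ^ (n - 1 - a)) ⊗ₜ x

variable {σ : Wplus K Q n e →ₗ[K] (K[X] ⧸ Ideal.span {(X : K[X]) ^ (n - 1)}) ⊗[K] Q}

namespace IsExponentReversal

theorem exists_leftInverse (hσ : IsExponentReversal σ) :
    ∃ τ : (K[X] ⧸ Ideal.span {(X : K[X]) ^ (n - 1)}) ⊗[K] Q →ₗ[K] degreeLT K n ⊗[K] Q,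
      τ ∘ₗ σ = (Wplus K Q n e).subtype := by
  let b := truncatedMonomialBasis K (n - 1)
  refine ⟨(b.constr K fun i => e (n - 1 - i)).rTensor Q,
    Wplus_linearMap_ext fun a ha ha' x w hw => ?_⟩
  have hb : Ideal.Quotient.mk _ (X ^ (n - 1 - a)) = b ⟨n - 1 - a, by omega⟩ :=
    (truncatedMonomialBasis_apply K (n - 1) ⟨n - 1 - a, by omega⟩).symm
  rw [LinearMap.comp_apply, hσ a ha ha' x w hw, LinearMap.rTensor_tmul, hb, b.constr_basis,
    Submodule.subtype_apply, hw, Nat.sub_sub_self (by omega)]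

theorem injective (hσ : IsExponentReversal σ) : Function.Injective σ := by
  obtain ⟨τ, hτ⟩ := hσ.exists_leftInverse
  refine .of_comp (f := τ) ?_
  rw [← LinearMap.coe_comp, hτ]
  exact (Wplus K Q n e).injective_subtype

theorem surjective (hσ : IsExponentReversal σ) : Function.Surjective σ := by
  let b := truncatedMonomialBasis K (n - 1)
  have hbasis (i : Fin (n - 1)) (x : Q) : b i ⊗ₜ x ∈ LinearMap.range σ := by
    refine ⟨⟨e (n - 1 - i) ⊗ₜ x, tmul_mem_Wplus (by omega) (by omega) x⟩, ?_⟩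
    rw [hσ _ (by omega) (by omega) x _ rfl, Nat.sub_sub_self (by omega),
      truncatedMonomialBasis_apply]
  rw [← LinearMap.range_eq_top, eq_top_iff, ← TensorProduct.span_tmul_eq_top, Submodule.span_le]
  rintro _ ⟨q, x, rfl⟩
  have hcomap : (LinearMap.range σ).comap ((TensorProduct.mk K _ Q).flip x) = ⊤ :=
    eq_top_iff.2 (b.span_eq ▸ Submodule.span_le.2 (Set.range_subset_iff.2 fun i => hbasis i x))
  exact Submodule.mem_comap.1 (hcomap ▸ Submodule.mem_top : q ∈ _)

end IsExponentReversal

end Reversal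

section LieHom

variable {K : Type*} [Field K] {Q : Type*} [LieRing Q] [LieAlgebra K Q] {n : ℕ}
  {ℓ : (degreeLT K n ⊗[K] Q) →ₗ[K] (degreeLT K n ⊗[K] Q) →ₗ[K] (degreeLT K n ⊗[K] Q)}
  {e : ℕ → degreeLT K n}
  {σ : Wplus K Q n e →ₗ[K] (K[X] ⧸ Ideal.span {(X : K[X]) ^ (n - 1)}) ⊗[K] Q}

noncomputable def IsRemainderDiffBracket.restrictWplus (hℓ : IsRemainderDiffBracket n ℓ)
    (he : ∀ a < n, (e a : K[X]) = X ^ a) :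
    Wplus K Q n e →ₗ[K] Wplus K Q n e →ₗ[K] Wplus K Q n e :=
  (ℓ.domRestrict₁₂ (Wplus K Q n e) (Wplus K Q n e)).codRestrict₂
    (Wplus K Q n e).subtype (Wplus K Q n e).injective_subtype fun u v => by
      rw [Submodule.range_subtype]
      exact hℓ.apply_mem_Wplus he u.2 v.2

theorem IsRemainderDiffBracket.coe_restrictWplus_apply (hℓ : IsRemainderDiffBracket n ℓ)
    (he : ∀ a < n, (e a : K[X]) = X ^ a) (u v : Wplus K Q n e) :
    (hℓ.restrictWplus he u v : degreeLT K n ⊗[K] Q) = ℓ u v :=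
  LinearMap.codRestrict₂_apply _ (Wplus K Q n e).subtype _ _ u v

namespace IsExponentReversal

theorem map_eq_lie_of_eq_tmul (hσ : IsExponentReversal σ) (hℓ : IsRemainderDiffBracket n ℓ)
    (he : ∀ a < n, (e a : K[X]) = X ^ a) {a b : ℕ} (ha : 1 ≤ a) (ha' : a ≤ n - 1) (hb : 1 ≤ b)
    (hb' : b ≤ n - 1) {x y : Q} {u v w : Wplus K Q n e}
    (hu : (u : degreeLT K n ⊗[K] Q) = e a ⊗ₜ x) (hv : (v : degreeLT K n ⊗[K] Q) = e b ⊗ₜ y)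
    (hw : (w : degreeLT K n ⊗[K] Q) = ℓ u v) : σ w = ⁅σ u, σ v⁆ := by
  rw [hσ a ha ha' x u hu, hσ b hb hb' y v hv, LieAlgebra.ExtendScalars.bracket_tmul, ← map_mul,
    ← pow_add]
  rcases lt_or_ge (a + b) n with hab | hab
  · have hw0 : w = 0 := Subtype.ext (by
      rw [hw, hu, hv, hℓ.apply_tmul_of_add_lt he (by omega) hab, Submodule.coe_zero])
    rw [hw0, map_zero, mk_X_pow_eq_zero_of_le (by omega), zero_tmul]
  · rw [hσ (a + b - n + 1) (by omega) (by omega) ⁅x, y⁆ w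
      (by rw [hw, hu, hv, hℓ.apply_tmul_of_le_add he (by omega) (by omega) hab])]
    congr 3
    omega

theorem map_eq_lie (hσ : IsExponentReversal σ) (hℓ : IsRemainderDiffBracket n ℓ)
    (he : ∀ a < n, (e a : K[X]) = X ^ a) {u v w : Wplus K Q n e}
    (hw : (w : degreeLT K n ⊗[K] Q) = ℓ u v) : σ w = ⁅σ u, σ v⁆ := by
  have hbilin : (hℓ.restrictWplus he).compr₂ σ = (LinearMap.mk₂ K
      (fun p q : (K[X] ⧸ Ideal.span {(X : K[X]) ^ (n - 1)}) ⊗[K] Q => ⁅p, q⁆)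
      (fun p q r => add_lie p q r) (fun c p q => smul_lie c p q) (fun p q r => lie_add p q r)
      (fun c p q => lie_smul c p q)).compl₁₂ σ σ :=
    Wplus_linearMap_ext₂ fun a ha ha' b hb hb' x y u v hu hv =>
      hσ.map_eq_lie_of_eq_tmul hℓ he ha ha' hb hb' hu hv (hℓ.coe_restrictWplus_apply he u v)
  have hw' : w = hℓ.restrictWplus he u v :=
    Subtype.ext (by rw [hw, hℓ.coe_restrictWplus_apply])
  rw [hw']
  exact LinearMap.congr_fun₂ hbilin u v

end IsExponentReversal

end LieHom

theorem ell_prime_iso_takiff_plus_abelian_general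
    (K : Type*) [Field K]
    (Q : Type*) [LieRing Q] [LieAlgebra K Q]
    (n : ℕ) (hn : 2 ≤ n)
    (ℓ : ((Polynomial.degreeLT K n : Submodule K (Polynomial K)) ⊗[K] Q) →ₗ[K]
      ((Polynomial.degreeLT K n : Submodule K (Polynomial K)) ⊗[K] Q) →ₗ[K]
      ((Polynomial.degreeLT K n : Submodule K (Polynomial K)) ⊗[K] Q))
    (hℓ : ∀ (f g : Polynomial.degreeLT K n) (x y : Q),
      (LinearMap.rTensor Q (Polynomial.degreeLT K n).subtype) (ℓ (f ⊗ₜ x) (g ⊗ₜ y)) =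
        ((((f : Polynomial K) * (g : Polynomial K)) %ₘ (X ^ n - X) -
          ((f : Polynomial K) * (g : Polynomial K)) %ₘ (X ^ n : Polynomial K)) ⊗ₜ ⁅x, y⁆))
    (e : ℕ → Polynomial.degreeLT K n)
    (he : ∀ a, a < n → ((e a : Polynomial K) = X ^ a))
    (σ : (Wplus K Q n e) →ₗ[K]
      (Polynomial K ⧸ Ideal.span {(X : Polynomial K) ^ (n - 1)}) ⊗[K] Q)
    (hσ : ∀ (a : ℕ), 1 ≤ a → a ≤ n - 1 → ∀ (x : Q) (w : Wplus K Q n e),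
      (w : (Polynomial.degreeLT K n : Submodule K (Polynomial K)) ⊗[K] Q) = e a ⊗ₜ x →
      σ w = (Ideal.Quotient.mk (Ideal.span {(X : Polynomial K) ^ (n - 1)}) (X ^ (n - 1 - a))) ⊗ₜ x) :
    (∀ (x : Q) (v : (Polynomial.degreeLT K n : Submodule K (Polynomial K)) ⊗[K] Q),
      ℓ (e 0 ⊗ₜ x) v = 0) ∧
    (∀ u v, u ∈ Wplus K Q n e → v ∈ Wplus K Q n e → ℓ u v ∈ Wplus K Q n e) ∧
    Function.Bijective σ ∧
    (∀ (u v w : Wplus K Q n e),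
      (w : (Polynomial.degreeLT K n : Submodule K (Polynomial K)) ⊗[K] Q) = ℓ u v →
      σ w = ⁅σ u, σ v⁆) := by
  have hσ' : IsExponentReversal σ := hσ
  exact ⟨IsRemainderDiffBracket.apply_one_tmul hℓ (by omega) (by rw [he 0 (by omega), pow_zero]),
    fun _ _ => IsRemainderDiffBracket.apply_mem_Wplus hℓ he,
    ⟨hσ'.injective, hσ'.surjective⟩,
    fun _ _ _ => hσ'.map_eq_lie hℓ he⟩

set_option synthInstance.maxHeartbeats 1000000 in
set_option maxHeartbeats 1000000 in
/-- `(W, ℓ')`, where `ℓ' = [ , ]_{t^n-t} - [ , ]_{t^n}` on `W = K[t]_{<n} ⊗ 𝔮`, is the direct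
sum of an abelian copy of `𝔮` (the central subspace `1 ⊗ 𝔮`) and the Takiff algebra
`𝔮⟨n-1⟩`, realised by `σ(t^a ⊗ x) = t̄^{n-1-a} ⊗ x` on `W₊`. -/
theorem ell_prime_iso_takiff_plus_abelian
    (K : Type*) [Field K] [CharZero K]
    (Q : Type*) [LieRing Q] [LieAlgebra K Q]
    (n : ℕ) (hn : 2 ≤ n)
    (ℓ : ((Polynomial.degreeLT K n : Submodule K (Polynomial K)) ⊗[K] Q) →ₗ[K]
      ((Polynomial.degreeLT K n : Submodule K (Polynomial K)) ⊗[K] Q) →ₗ[K]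
      ((Polynomial.degreeLT K n : Submodule K (Polynomial K)) ⊗[K] Q))
    (hℓ : ∀ (f g : Polynomial.degreeLT K n) (x y : Q),
      (LinearMap.rTensor Q (Polynomial.degreeLT K n).subtype) (ℓ (f ⊗ₜ x) (g ⊗ₜ y)) =
        ((((f : Polynomial K) * (g : Polynomial K)) %ₘ (X ^ n - X) -
          ((f : Polynomial K) * (g : Polynomial K)) %ₘ (X ^ n : Polynomial K)) ⊗ₜ ⁅x, y⁆))
    (e : ℕ → Polynomial.degreeLT K n)
    (he : ∀ a, a < n → ((e a : Polynomial K) = X ^ a))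
    (σ : (Wplus K Q n e) →ₗ[K]
      (Polynomial K ⧸ Ideal.span {(X : Polynomial K) ^ (n - 1)}) ⊗[K] Q)
    (hσ : ∀ (a : ℕ), 1 ≤ a → a ≤ n - 1 → ∀ (x : Q) (w : Wplus K Q n e),
      (w : (Polynomial.degreeLT K n : Submodule K (Polynomial K)) ⊗[K] Q) = e a ⊗ₜ x →
      σ w = (Ideal.Quotient.mk (Ideal.span {(X : Polynomial K) ^ (n - 1)}) (X ^ (n - 1 - a))) ⊗ₜ x) :
    (∀ (x : Q) (v : (Polynomial.degreeLT K n : Submodule K (Polynomial K)) ⊗[K] Q),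
      ℓ (e 0 ⊗ₜ x) v = 0) ∧
    (∀ u v, u ∈ Wplus K Q n e → v ∈ Wplus K Q n e → ℓ u v ∈ Wplus K Q n e) ∧
    Function.Bijective σ ∧
    (∀ (u v w : Wplus K Q n e),
      (w : (Polynomial.degreeLT K n : Submodule K (Polynomial K)) ⊗[K] Q) = ℓ u v →
      σ w = ⁅σ u, σ v⁆) :=
  ell_prime_iso_takiff_plus_abelian_general K Q n hn ℓ hℓ e he σ hσ
end
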